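/- arXiv:1804.08902 — 15 statements merged into one kernel-verified Lean document; each statement's English description precedes it below -/
import Mathlib

section
/- Let P be a finite set and fix a repository on P with an arbitrary broken set B ⊆ P, arbitrary dependency sets K, U ⊆ P × P, and no conflicts (C = ∅). Let M be the set of all packages of P that are not defective. Then M is a successful installation, and every successful installation is a subset of M; consequently M is the unique maximum-size successful installation. -/
/-- A software repository on package set `Fin n`: known dependencies `K`,
unknown dependencies `U`, conflicts `C` (unordered pairs of distinct packages),
and broken packages `B`. -/
structure Repo (n : ℕ) where
  K : Finset (Fin n × Fin n)
  U : Finset (Fin n × Fin n)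
  C : Finset (Sym2 (Fin n))
  B : Finset (Fin n)
  hC : ∀ s ∈ C, ¬ s.IsDiag

/-- An installation `I` is successful if it avoids broken packages, is closed
under all (known and unknown) dependencies, and contains no conflicting pair. -/
def Successful {n : ℕ} (R : Repo n) (I : Finset (Fin n)) : Prop :=
  Disjoint I R.B ∧
  (∀ e ∈ R.K ∪ R.U, e.1 ∈ I → e.2 ∈ I) ∧
  (∀ s ∈ R.C, ¬ ∀ x ∈ s, x ∈ I)

/-- A package is defective if no successful installation contains it. -/
def Defective {n : ℕ} (R : Repo n) (p : Fin n) : Prop :=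
  ∀ I : Finset (Fin n), Successful R I → p ∉ I

/-- The set of defective packages. -/
def DefSet {n : ℕ} (R : Repo n) : Set (Fin n) := {p | Defective R p}

/-- Two packages weakly conflict if no successful installation contains both. -/
def WeakConflict {n : ℕ} (R : Repo n) (p q : Fin n) : Prop :=
  ∀ I : Finset (Fin n), Successful R I → ¬ (p ∈ I ∧ q ∈ I)

/-- `p` weakly depends on `q` if every successful installation containing `p`
also contains `q`. -/
def WeakDep {n : ℕ} (R : Repo n) (p q : Fin n) : Prop :=
  ∀ I : Finset (Fin n), Successful R I → p ∈ I → q ∈ I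

/-- The weakly-conflicting pairs of non-defective packages (each unordered pair
counted once via `<`). -/
def WeakConflictPairs {n : ℕ} (R : Repo n) : Set (Fin n × Fin n) :=
  {pq | pq.1 < pq.2 ∧ ¬ Defective R pq.1 ∧ ¬ Defective R pq.2 ∧
    WeakConflict R pq.1 pq.2}

/-- `(n,a,b)`-cover-free family. -/
def IsCFF (n a b : ℕ) (T : Finset (Finset (Fin n))) : Prop :=
  ∀ S₁ S₂ : Finset (Fin n), Disjoint S₁ S₂ → S₁.card = a → S₂.card = b →
    ∃ v ∈ T, Disjoint v S₁ ∧ S₂ ⊆ v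

/-- The `(≤a, ≤b)`-covering property. -/
def CoveringLE (n a b : ℕ) (F : Finset (Finset (Fin n))) : Prop :=
  ∀ S₁ S₂ : Finset (Fin n), Disjoint S₁ S₂ → S₁.card ≤ a →
    1 ≤ S₂.card → S₂.card ≤ b → ∃ v ∈ F, Disjoint v S₁ ∧ S₂ ⊆ v

/-- The digraph of known dependencies is acyclic. -/
def Acyclic {n : ℕ} (K : Finset (Fin n × Fin n)) : Prop :=
  ∀ p : Fin n, ¬ Relation.TransGen (fun x y => (x, y) ∈ K) p p

open Classical in
/-- The `K`-closure of `v`: everything reachable from `v` along `K`-edges. -/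
noncomputable def kclosure {n : ℕ} (K : Finset (Fin n × Fin n))
    (v : Finset (Fin n)) : Finset (Fin n) :=
  Finset.univ.filter
    (fun p => ∃ q ∈ v, Relation.ReflTransGen (fun x y => (x, y) ∈ K) q p)

/-- `Sset R T p`: the queries of `T` that are successful installations
containing `p`. -/
def Sset {n : ℕ} (R : Repo n) (T : Finset (Finset (Fin n))) (p : Fin n) :
    Set (Finset (Fin n)) :=
  {t | t ∈ T ∧ Successful R t ∧ p ∈ t}


/-- With no conflicts, the set `M` of non-defective packages is itself a
successful installation, contains every successful installation, and is the
unique maximum-size successful installation. -/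
theorem max_subrepo_no_conflicts (n : ℕ) (R : Repo n) (hC : R.C = ∅)
    (M : Finset (Fin n)) (hM : ∀ p : Fin n, p ∈ M ↔ ¬ Defective R p) :
    Successful R M ∧ (∀ I : Finset (Fin n), Successful R I → I ⊆ M) ∧
      (∀ I : Finset (Fin n), Successful R I → I.card = M.card → I = M) := by
  have hsub : ∀ I : Finset (Fin n), Successful R I → I ⊆ M := by
    intro I hI p hp
    rw [hM]
    intro hd
    exact hd I hI hp
  have hnd : ∀ p ∈ M, ∃ I, Successful R I ∧ p ∈ I := by
    intro p hp
    have := (hM p).1 hp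
    simp only [Defective, not_forall] at this
    obtain ⟨I, hI⟩ := this
    exact ⟨I, hI.1, not_not.mp hI.2⟩
  have hsucc : Successful R M := by
    refine ⟨?_, ?_, ?_⟩
    · rw [Finset.disjoint_left]
      intro p hp hpB
      obtain ⟨I, hI, hpI⟩ := hnd p hp
      exact Finset.disjoint_left.mp hI.1 hpI hpB
    · intro e he h1
      obtain ⟨I, hI, hpI⟩ := hnd e.1 h1
      exact hsub I hI (hI.2.1 e he hpI)
    · intro s hs
      simp [hC] at hs
  exact ⟨hsucc, hsub, fun I hI hcard =>
    Finset.eq_of_subset_of_card_le (hsub I hI) (le_of_eq hcard.symm)⟩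
end

section
/- Let n ≥ 1, let P = {a₁,…,a_n}, and let K = {(a_i, a_{i−1}) : 2 ≤ i ≤ n} be the directed path of known dependencies. Let T be a family of subsets of P with the following property: for every two repositories on P having this K, C = ∅, at most one unknown dependency (|U| ≤ 1) and at most one broken package (|B| ≤ 1), if every query in T receives identical feedback under both repositories then the two repositories have the same set of defective packages. Then |T| ≥ n. -/
/-- The directed path of known dependencies `a_i → a_{i-1}`
(zero-based: edges `(j+1, j)`). -/
def Kpath (n : ℕ) : Finset (Fin n × Fin n) :=
  Finset.univ.filter (fun e => (e.1 : ℕ) = (e.2 : ℕ) + 1)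

/-- A repository with `K = Kpath n` and no conflicts. -/
def pathRepo {n : ℕ} (U : Finset (Fin n × Fin n)) (B : Finset (Fin n)) : Repo n :=
  ⟨Kpath n, U, ∅, B, by simp⟩

lemma successful_pathRepo {n : ℕ} (U : Finset (Fin n × Fin n)) (B : Finset (Fin n))
    (t : Finset (Fin n)) :
    Successful (pathRepo U B) t ↔
      Disjoint t B ∧ ∀ e ∈ Kpath n ∪ U, e.1 ∈ t → e.2 ∈ t := by
  simp [Successful, pathRepo]

lemma kpath_mem {n : ℕ} (e : Fin n × Fin n) : e ∈ Kpath n ↔ (e.1 : ℕ) = (e.2 : ℕ) + 1 := by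
  simp [Kpath]

lemma kpath_downset_aux {n : ℕ} {t : Finset (Fin n)}
    (h : ∀ e ∈ Kpath n, e.1 ∈ t → e.2 ∈ t) :
    ∀ (k : ℕ) (q : Fin n), q ∈ t → ∀ p : Fin n, (p : ℕ) + k = (q : ℕ) → p ∈ t := by
  intro k
  induction k with
  | zero =>
    intro q hq p hp
    have : p = q := Fin.ext (by omega)
    rwa [this]
  | succ k ih =>
    intro q hq p hp
    have hlt : (p : ℕ) + k < n := by have := q.isLt; omega
    have hq' : (⟨(p : ℕ) + k, hlt⟩ : Fin n) ∈ t := by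
      apply h (q, ⟨(p : ℕ) + k, hlt⟩) _ hq
      rw [kpath_mem]
      simp
      omega
    exact ih ⟨(p : ℕ) + k, hlt⟩ hq' p rfl

lemma kpath_downset {n : ℕ} {t : Finset (Fin n)}
    (h : ∀ e ∈ Kpath n, e.1 ∈ t → e.2 ∈ t) {p q : Fin n} (hpq : p ≤ q) (hq : q ∈ t) :
    p ∈ t := by
  have : (p : ℕ) ≤ (q : ℕ) := hpq
  exact kpath_downset_aux h ((q : ℕ) - (p : ℕ)) q hq p (by omega)

/-- On the dependency path, any non-adaptive query family distinguishing the
defective sets of all repositories with at most one unknown dependency and at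
most one broken package must have at least `n` queries. -/
theorem maximal_subrepo_linear_lower_bound (n : ℕ) (hn : 1 ≤ n)
    (T : Finset (Finset (Fin n)))
    (hT : ∀ R₁ R₂ : Repo n,
      R₁.K = Kpath n → R₂.K = Kpath n →
      R₁.C = ∅ → R₂.C = ∅ →
      R₁.U.card ≤ 1 → R₂.U.card ≤ 1 →
      R₁.B.card ≤ 1 → R₂.B.card ≤ 1 →
      (∀ t ∈ T, Successful R₁ t ↔ Successful R₂ t) →
      DefSet R₁ = DefSet R₂) :
    n ≤ T.card := by
  classical
  set Q : Fin n → Finset (Fin n) := fun j => Finset.univ.filter (fun p => p ≤ j) with hQ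
  have hQmem : ∀ j p : Fin n, p ∈ Q j ↔ p ≤ j := by
    intro j p; simp [hQ]
  have hQT : ∀ j : Fin n, Q j ∈ T := by
    intro j
    by_cases hj : (j : ℕ) + 1 < n
    · -- middle case: broken j+1 vs broken j+1 plus unknown dep (j, j+1)
      set js : Fin n := ⟨(j : ℕ) + 1, hj⟩ with hjs
      set R₁ : Repo n := pathRepo ∅ {js} with hR1
      set R₂ : Repo n := pathRepo {(j, js)} {js} with hR2
      have hS1 : ∀ t, Successful R₁ t ↔
          (js ∉ t ∧ ∀ e ∈ Kpath n, e.1 ∈ t → e.2 ∈ t) := by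
        intro t
        rw [hR1, successful_pathRepo]
        simp [Finset.disjoint_singleton_right]
      have hS2 : ∀ t, Successful R₂ t ↔ (Successful R₁ t ∧ j ∉ t) := by
        intro t
        rw [hR2, successful_pathRepo, hS1]
        simp only [Finset.mem_union, Finset.mem_singleton, Finset.disjoint_singleton_right]
        constructor
        · rintro ⟨hjs, hcl⟩
          refine ⟨⟨hjs, fun e he => hcl e (Or.inl he)⟩, fun hjt => hjs ?_⟩
          exact hcl (j, js) (Or.inr rfl) hjt
        · rintro ⟨⟨hjs, hcl⟩, hjt⟩
          refine ⟨hjs, fun e he => ?_⟩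
          rcases he with he | he
          · exact hcl e he
          · subst he; intro h; exact absurd h hjt
      have hdef2 : Defective R₂ j := fun I hI => ((hS2 I).1 hI).2
      have hndef1 : ¬ Defective R₁ j := by
        intro h
        apply h (Q j) _ ((hQmem j j).2 le_rfl)
        rw [hS1]
        constructor
        · intro hmem
          have : js ≤ j := (hQmem j js).1 hmem
          have : (js : ℕ) ≤ (j : ℕ) := this
          simp [hjs] at this
        · intro e he h1
          rw [kpath_mem] at he
          have h1' : (e.1 : ℕ) ≤ (j : ℕ) := (hQmem j e.1).1 h1
          exact (hQmem j e.2).2 (by omega : (e.2 : ℕ) ≤ (j : ℕ))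
      have hne : DefSet R₁ ≠ DefSet R₂ := by
        intro h
        exact hndef1 (h ▸ hdef2 : j ∈ DefSet R₁)
      have hex : ¬ ∀ t ∈ T, Successful R₁ t ↔ Successful R₂ t := fun h =>
        hne (hT R₁ R₂ rfl rfl rfl rfl (by simp [hR1, pathRepo]) (by simp [hR2, pathRepo])
          (by simp [hR1, pathRepo]) (by simp [hR2, pathRepo]) h)
      push_neg at hex
      obtain ⟨t, htT, hti⟩ := hex
      have hS2imp : Successful R₂ t → Successful R₁ t := fun h => ((hS2 t).1 h).1
      have h1 : Successful R₁ t := by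
        rcases hti with ⟨h, _⟩ | ⟨_, h⟩
        · exact h
        · exact hS2imp h
      have hjt : j ∈ t := by
        by_contra hjt
        have h2 : Successful R₂ t := (hS2 t).2 ⟨h1, hjt⟩
        rcases hti with ⟨_, hB⟩ | ⟨hA, _⟩
        · exact hB h2
        · exact hA h1
      obtain ⟨hjst, hcl⟩ := (hS1 t).1 h1
      have : t = Q j := by
        ext p
        rw [hQmem]
        constructor
        · intro hp
          by_contra hpj
          have hjp : (j : ℕ) < (p : ℕ) := by
            rw [Fin.le_def] at hpj; omega
          have : js ≤ p := by rw [Fin.le_def]; simp [hjs]; omega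
          exact hjst (kpath_downset hcl this hp)
        · intro hp
          exact kpath_downset hcl hp hjt
      rwa [this] at htT
    · -- top case: j = n - 1; trivial repo vs broken j
      have hjn : (j : ℕ) + 1 = n := by have := j.isLt; omega
      set R₁ : Repo n := pathRepo ∅ ∅ with hR1
      set R₂ : Repo n := pathRepo ∅ {j} with hR2
      have hS1 : ∀ t, Successful R₁ t ↔ (∀ e ∈ Kpath n, e.1 ∈ t → e.2 ∈ t) := by
        intro t
        rw [hR1, successful_pathRepo]
        simp
      have hS2 : ∀ t, Successful R₂ t ↔ (Successful R₁ t ∧ j ∉ t) := by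
        intro t
        rw [hR2, successful_pathRepo, hS1]
        simp [Finset.disjoint_singleton_right]
        tauto
      have hdef2 : Defective R₂ j := fun I hI => ((hS2 I).1 hI).2
      have hndef1 : ¬ Defective R₁ j := by
        intro h
        apply h (Q j) _ ((hQmem j j).2 le_rfl)
        rw [hS1]
        intro e he h1
        rw [kpath_mem] at he
        have h1' : (e.1 : ℕ) ≤ (j : ℕ) := (hQmem j e.1).1 h1
        exact (hQmem j e.2).2 (by omega : (e.2 : ℕ) ≤ (j : ℕ))
      have hne : DefSet R₁ ≠ DefSet R₂ := by
        intro h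
        exact hndef1 (h ▸ hdef2 : j ∈ DefSet R₁)
      have hex : ¬ ∀ t ∈ T, Successful R₁ t ↔ Successful R₂ t := fun h =>
        hne (hT R₁ R₂ rfl rfl rfl rfl (by simp [hR1, pathRepo]) (by simp [hR2, pathRepo])
          (by simp [hR1, pathRepo]) (by simp [hR2, pathRepo]) h)
      push_neg at hex
      obtain ⟨t, htT, hti⟩ := hex
      have hS2imp : Successful R₂ t → Successful R₁ t := fun h => ((hS2 t).1 h).1
      have h1 : Successful R₁ t := by
        rcases hti with ⟨h, _⟩ | ⟨_, h⟩
        · exact h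
        · exact hS2imp h
      have hjt : j ∈ t := by
        by_contra hjt
        have h2 : Successful R₂ t := (hS2 t).2 ⟨h1, hjt⟩
        rcases hti with ⟨_, hB⟩ | ⟨hA, _⟩
        · exact hB h2
        · exact hA h1
      have hcl := (hS1 t).1 h1
      have : t = Q j := by
        ext p
        rw [hQmem]
        constructor
        · intro _
          rw [Fin.le_def]
          have := p.isLt; omega
        · intro hp
          exact kpath_downset hcl hp hjt
      rwa [this] at htT
  have hinj : Set.InjOn Q (Finset.univ : Finset (Fin n)) := by
    intro a _ b _ hab
    have h1 : a ∈ Q b := hab ▸ (hQmem a a).2 le_rfl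
    have h2 : b ∈ Q a := hab ▸ (hQmem b b).2 le_rfl
    exact le_antisymm ((hQmem b a).1 h1) ((hQmem a b).1 h2)
  calc n = (Finset.univ : Finset (Fin n)).card := by simp
    _ ≤ T.card := Finset.card_le_card_of_injOn Q (fun j _ => hQT j) hinj
end

section
/- Let d ≥ 1, u ≥ 0 and n ≥ u + d. Let T be a family of subsets of P = {1,…,n} with the following property: for every two repositories on P with K = ∅, C = ∅, at most u unknown dependencies (|U| ≤ u) and at most d defective packages each, if every query in T receives identical feedback under both repositories then the two repositories have the same set of defective packages. Then T is an (n, d−1, u+1)-cover-free family. -/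
/-!
If `T` fails to be cover-free, pick `S₁` of size `d - 1` and `S₂` of size `u + 1` with no
query of `T` avoiding `S₁` and containing `S₂`, and pick `p ∈ S₂`. The repository whose
broken packages are `S₁ ∪ {p}` and the one whose broken packages are `S₁` and in which `p`
depends on the `u` other elements of `S₂` answer every query of `T` alike: in both, a query
meeting `S₁` fails, and a query avoiding `S₁` cannot contain all of `S₂`, so it succeeds
exactly when it omits `p`. Their defective sets `S₁ ∪ {p}` and `S₁` still differ.
-/

namespace Repo

variable {n : ℕ}

def ofDeps (U : Finset (Fin n × Fin n)) (B : Finset (Fin n)) : Repo n :=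
  ⟨∅, U, ∅, B, by simp⟩

def starDeps (p : Fin n) (S : Finset (Fin n)) : Finset (Fin n × Fin n) :=
  S.image (Prod.mk p)

theorem card_starDeps (p : Fin n) (S : Finset (Fin n)) : (starDeps p S).card = S.card :=
  Finset.card_image_of_injective S (Prod.mk_right_injective p)

theorem successful_ofDeps_iff {U : Finset (Fin n × Fin n)} {B I : Finset (Fin n)} :
    Successful (ofDeps U B) I ↔ Disjoint I B ∧ ∀ e ∈ U, e.1 ∈ I → e.2 ∈ I := by
  simp [Successful, ofDeps]

theorem successful_ofDeps_empty_iff {B I : Finset (Fin n)} :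
    Successful (ofDeps ∅ B) I ↔ Disjoint I B := by
  simp [successful_ofDeps_iff]

theorem successful_ofDeps_starDeps_iff {p : Fin n} {S B I : Finset (Fin n)} :
    Successful (ofDeps (starDeps p S) B) I ↔ Disjoint I B ∧ (p ∈ I → S ⊆ I) := by
  simp only [successful_ofDeps_iff, starDeps, Finset.forall_mem_image]
  exact and_congr_right fun _ => ⟨fun h hp _ hq => h hq hp, fun h _ hq hp => h hp hq⟩

theorem coe_B_subset_defSet (R : Repo n) : (R.B : Set (Fin n)) ⊆ DefSet R :=
  fun _ hq _ hI hqI => Finset.disjoint_left.mp hI.1 hqI hq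

/-- When no dependency points into `B`, the complement of `B` is a successful installation. -/
theorem defSet_ofDeps {U : Finset (Fin n × Fin n)} {B : Finset (Fin n)}
    (hU : ∀ e ∈ U, e.2 ∉ B) : DefSet (ofDeps U B) = B := by
  refine subset_antisymm (fun q hq => ?_) (coe_B_subset_defSet (ofDeps U B))
  by_contra hqB
  have hBc : Successful (ofDeps U B) Bᶜ :=
    successful_ofDeps_iff.mpr ⟨disjoint_compl_left, fun e he _ => Finset.mem_compl.mpr (hU e he)⟩
  exact hq _ hBc (Finset.mem_compl.mpr hqB)

theorem successful_iff_of_not_superset {p : Fin n} {S₁ S₂ t : Finset (Fin n)} (hp : p ∈ S₂)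
    (ht : Disjoint t S₁ → ¬ S₂ ⊆ t) :
    Successful (ofDeps ∅ (insert p S₁)) t ↔
      Successful (ofDeps (starDeps p (S₂.erase p)) S₁) t := by
  rw [successful_ofDeps_empty_iff, successful_ofDeps_starDeps_iff, Finset.disjoint_insert_right,
    and_comm]
  refine and_congr_right fun htS₁ => ⟨fun hpt hpt' => absurd hpt' hpt, fun hcover hpt => ?_⟩
  exact ht htS₁ (Finset.insert_erase hp ▸ Finset.insert_subset hpt (hcover hpt))

end Repo

open Repo in
theorem maximal_subrepo_CFF_lower_bound_general (n u d : ℕ) (hd : 1 ≤ d)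
    (T : Finset (Finset (Fin n)))
    (hT : ∀ R₁ R₂ : Repo n,
      R₁.K = ∅ → R₂.K = ∅ → R₁.C = ∅ → R₂.C = ∅ →
      R₁.U.card ≤ u → R₂.U.card ≤ u →
      (DefSet R₁).ncard ≤ d → (DefSet R₂).ncard ≤ d →
      (∀ t ∈ T, Successful R₁ t ↔ Successful R₂ t) →
      DefSet R₁ = DefSet R₂) :
    IsCFF n (d - 1) (u + 1) T := by
  intro S₁ S₂ hdisj h₁ h₂
  by_contra! hT_not_cover
  obtain ⟨p, hp⟩ : S₂.Nonempty := Finset.card_pos.mp (by omega)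
  have hpS₁ : p ∉ S₁ := Finset.disjoint_right.mp hdisj hp
  have hdef₁ : DefSet (ofDeps ∅ (insert p S₁)) = ↑(insert p S₁) := defSet_ofDeps (by simp)
  have hdef₂ : DefSet (ofDeps (starDeps p (S₂.erase p)) S₁) = S₁ :=
    defSet_ofDeps fun _ he => by
      obtain ⟨q, hq, rfl⟩ := Finset.mem_image.mp he
      exact Finset.disjoint_right.mp hdisj (Finset.mem_of_mem_erase hq)
  have hsame := hT _ _ rfl rfl rfl rfl (by simp [ofDeps])
    (by simp [ofDeps, card_starDeps, Finset.card_erase_of_mem hp, h₂])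
    (by rw [hdef₁, Set.ncard_coe_finset, Finset.card_insert_of_notMem hpS₁]; omega)
    (by rw [hdef₂, Set.ncard_coe_finset]; omega)
    (fun t ht => successful_iff_of_not_superset hp (hT_not_cover t ht))
  rw [hdef₁, hdef₂, Finset.coe_inj] at hsame
  exact hpS₁ (hsame ▸ Finset.mem_insert_self p S₁)

/-- Any non-adaptive query family solving Maximal Sub-repository with at most
`u` unknown dependencies and at most `d` defects is an
`(n, d-1, u+1)`-cover-free family. -/
theorem maximal_subrepo_CFF_lower_bound (n u d : ℕ) (hd : 1 ≤ d)
    (hn : u + d ≤ n) (T : Finset (Finset (Fin n)))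
    (hT : ∀ R₁ R₂ : Repo n,
      R₁.K = ∅ → R₂.K = ∅ → R₁.C = ∅ → R₂.C = ∅ →
      R₁.U.card ≤ u → R₂.U.card ≤ u →
      (DefSet R₁).ncard ≤ d → (DefSet R₂).ncard ≤ d →
      (∀ t ∈ T, Successful R₁ t ↔ Successful R₂ t) →
      DefSet R₁ = DefSet R₂) :
    IsCFF n (d - 1) (u + 1) T :=
  maximal_subrepo_CFF_lower_bound_general n u d hd T hT
end

section
/- Let P = {1,…,n} and fix a repository on P in which the digraph (P, K) of known dependencies is acyclic, C = ∅, there are at most u unknown dependencies (|U| ≤ u), and at most d packages are defective. Let F be a family of subsets of P satisfying the (≤d, ≤u+1)-covering property, and let the query family be T = {c(v) : v ∈ F}, where c(v) is the K-closure of v. Then for every package p ∈ P: p is defective if and only if S(p) = ∅, i.e., no successful query of T contains p. -/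
/-- With acyclic known dependencies, no conflicts, at most `u` unknown
dependencies and at most `d` defects, the `K`-closures of a
`(≤d, ≤u+1)`-covering family identify the defects: `p` is defective iff no
successful query contains it. -/
theorem defect_identification_unknown_deps (n u d : ℕ) (R : Repo n)
    (hacyc : Acyclic R.K) (hC : R.C = ∅) (hU : R.U.card ≤ u)
    (hd : (DefSet R).ncard ≤ d)
    (F : Finset (Finset (Fin n))) (hF : CoveringLE n d (u + 1) F) :
    ∀ p : Fin n,
      Defective R p ↔ Sset R (F.image (kclosure R.K)) p = ∅ := by

  classical
  intro p
  constructor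
  · intro hdef
    ext t
    simp only [Sset, Set.mem_setOf_eq, Set.mem_empty_iff_false, iff_false]
    rintro ⟨-, hs, hp⟩
    exact hdef t hs hp
  · intro hS
    by_contra hdef
    -- the defective set as a finset
    have hDfin : (DefSet R).Finite := Set.toFinite _
    set D : Finset (Fin n) := hDfin.toFinset with hDdef
    have hDcard : D.card ≤ d := by
      rw [hDdef, ← Set.ncard_eq_toFinset_card _ hDfin]
      exact hd
    -- nondefective packages propagate along K-reachability
    have key : ∀ q x : Fin n, ¬ Defective R q →
        Relation.ReflTransGen (fun x y => (x, y) ∈ R.K) q x → ¬ Defective R x := by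
      intro q x hq hxy
      simp only [Defective, not_forall, not_not] at hq ⊢
      obtain ⟨I, hI, hqI⟩ := hq
      refine ⟨I, hI, ?_⟩
      induction hxy with
      | refl => exact hqI
      | tail _ hk ih => exact hI.2.1 _ (Finset.mem_union_left _ hk) ih
    -- the test set
    set S₂ : Finset (Fin n) :=
      insert p ((R.U.image Prod.snd).filter fun r => ¬ Defective R r) with hS₂def
    have hndS₂ : ∀ x ∈ S₂, ¬ Defective R x := by
      intro x hx
      rw [hS₂def, Finset.mem_insert] at hx
      rcases hx with rfl | hx
      · exact hdef
      · exact (Finset.mem_filter.mp hx).2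
    have hdisj : Disjoint D S₂ := by
      rw [Finset.disjoint_right]
      intro x hx hxD
      exact hndS₂ x hx (by simpa [hDdef, DefSet] using hxD)
    have hcard1 : 1 ≤ S₂.card := Finset.card_pos.mpr ⟨p, Finset.mem_insert_self _ _⟩
    have hcard2 : S₂.card ≤ u + 1 := by
      calc S₂.card ≤ ((R.U.image Prod.snd).filter fun r => ¬ Defective R r).card + 1 :=
            Finset.card_insert_le _ _
        _ ≤ (R.U.image Prod.snd).card + 1 :=
            Nat.add_le_add_right (Finset.card_filter_le _ _) 1
        _ ≤ R.U.card + 1 := Nat.add_le_add_right (Finset.card_image_le) 1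
        _ ≤ u + 1 := Nat.add_le_add_right hU 1
    obtain ⟨v, hvF, hvD, hvS₂⟩ := hF D S₂ hdisj hDcard hcard1 hcard2
    set t : Finset (Fin n) := kclosure R.K v with htdef
    have hvt : v ⊆ t := by
      intro x hx
      simp only [htdef, kclosure, Finset.mem_filter, Finset.mem_univ, true_and]
      exact ⟨x, hx, Relation.ReflTransGen.refl⟩
    have hndt : ∀ x ∈ t, ¬ Defective R x := by
      intro x hx
      simp only [htdef, kclosure, Finset.mem_filter, Finset.mem_univ, true_and] at hx
      obtain ⟨q, hqv, hreach⟩ := hx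
      have hqnd : ¬ Defective R q := by
        intro hq
        exact (Finset.disjoint_left.mp hvD) hqv (by simpa [hDdef, DefSet] using hq)
      exact key q x hqnd hreach
    have hpt : p ∈ t := hvt (hvS₂ (Finset.mem_insert_self _ _))
    have hsucc : Successful R t := by
      refine ⟨?_, ?_, ?_⟩
      · rw [Finset.disjoint_left]
        intro x hx hxB
        refine hndt x hx ?_
        intro I hI hxI
        exact Finset.disjoint_left.mp hI.1 hxI hxB
      · intro e he h1
        rcases Finset.mem_union.mp he with hk | hu
        · simp only [htdef, kclosure, Finset.mem_filter, Finset.mem_univ, true_and] at h1 ⊢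
          obtain ⟨q, hqv, hreach⟩ := h1
          exact ⟨q, hqv, hreach.tail hk⟩
        · -- unknown dependency: target is in S₂
          have h1nd := hndt _ h1
          simp only [Defective, not_forall, not_not] at h1nd
          obtain ⟨I, hI, h1I⟩ := h1nd
          have h2I : e.2 ∈ I := hI.2.1 _ (Finset.mem_union_right _ hu) h1I
          have h2nd : ¬ Defective R e.2 := fun h => h I hI h2I
          have : e.2 ∈ S₂ := by
            rw [hS₂def, Finset.mem_insert]
            right
            exact Finset.mem_filter.mpr ⟨Finset.mem_image.mpr ⟨e, hu, rfl⟩, h2nd⟩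
          exact hvt (hvS₂ this)
      · intro s hs
        rw [hC] at hs
        exact absurd hs (Finset.notMem_empty s)
    have : t ∈ Sset R (F.image (kclosure R.K)) p :=
      ⟨Finset.mem_image.mpr ⟨v, hvF, rfl⟩, hsucc, hpt⟩
    rw [hS] at this
    exact this
end

section
/- Let P = {1,…,n} and fix a repository on P in which the digraph (P, K) of known dependencies is acyclic, C = ∅, there are at most u unknown dependencies (|U| ≤ u), and at most d packages are defective. Let F be a family of subsets of P satisfying the (≤d, ≤u+1)-covering property, and let the query family be T = {c(v) : v ∈ F}, where c(v) is the K-closure of v. Then the set M = {p ∈ P : S(p) ≠ ∅} is a successful installation and every successful installation is a subset of M; hence the feedback of the |F| queries of T determines the unique maximum-size successful installation. -/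
open Relation

section Repo

variable {n : ℕ} {R : Repo n}

theorem Successful.mem_of_reflTransGen {I : Finset (Fin n)} (hI : Successful R I) {q p : Fin n}
    (h : ReflTransGen (fun x y => (x, y) ∈ R.K) q p) (hq : q ∈ I) : p ∈ I := by
  induction h with
  | refl => exact hq
  | tail _ hxy ih => exact hI.2.1 _ (Finset.mem_union_left _ hxy) ih

theorem not_defective_iff {p : Fin n} :
    ¬ Defective R p ↔ ∃ I : Finset (Fin n), Successful R I ∧ p ∈ I := by
  simp [Defective]

theorem Defective.of_mem_B {p : Fin n} (hp : p ∈ R.B) : Defective R p :=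
  fun _ hI hpI => Finset.disjoint_left.1 hI.1 hpI hp

theorem not_defective_of_mem_dep {e : Fin n × Fin n} (he : e ∈ R.K ∪ R.U)
    (h : ¬ Defective R e.1) : ¬ Defective R e.2 := by
  obtain ⟨I, hI, hI₁⟩ := not_defective_iff.1 h
  exact not_defective_iff.2 ⟨I, hI, hI.2.1 e he hI₁⟩

theorem not_defective_of_reflTransGen {q p : Fin n}
    (h : ReflTransGen (fun x y => (x, y) ∈ R.K) q p) (hq : ¬ Defective R q) :
    ¬ Defective R p := by
  obtain ⟨I, hI, hqI⟩ := not_defective_iff.1 hq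
  exact not_defective_iff.2 ⟨I, hI, hI.mem_of_reflTransGen h hqI⟩

/-- Without conflicts, a union of successful installations is successful. -/
theorem successful_of_forall_mem_exists_subset (hC : R.C = ∅) {M : Finset (Fin n)}
    (h : ∀ p ∈ M, ∃ t, Successful R t ∧ p ∈ t ∧ t ⊆ M) : Successful R M := by
  refine ⟨Finset.disjoint_left.2 fun p hp hpB => ?_, fun e he h₁ => ?_, by simp [hC]⟩
  · obtain ⟨t, ht, hpt, -⟩ := h p hp
    exact Finset.disjoint_left.1 ht.1 hpt hpB
  · obtain ⟨t, ht, h₁t, htM⟩ := h e.1 h₁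
    exact htM (ht.2.1 e he h₁t)

end Repo

section KClosure

variable {n : ℕ} {K : Finset (Fin n × Fin n)} {v : Finset (Fin n)}

theorem mem_kclosure {p : Fin n} :
    p ∈ kclosure K v ↔ ∃ q ∈ v, ReflTransGen (fun x y => (x, y) ∈ K) q p := by
  simp [kclosure]

theorem subset_kclosure : v ⊆ kclosure K v :=
  fun q hq => mem_kclosure.2 ⟨q, hq, .refl⟩

theorem mem_kclosure_of_mem {e : Fin n × Fin n} (he : e ∈ K) (h : e.1 ∈ kclosure K v) :
    e.2 ∈ kclosure K v := by
  obtain ⟨q, hq, hqe⟩ := mem_kclosure.1 h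
  exact mem_kclosure.2 ⟨q, hq, hqe.tail he⟩

end KClosure

section Queries

variable {n : ℕ} {R : Repo n}

/-- Known dependencies are added by the closure; an unknown dependency leaving a
non-defective package ends in a non-defective one, which `v` already contains. -/
theorem successful_kclosure (hC : R.C = ∅) {v : Finset (Fin n)}
    (hv : ∀ q ∈ v, ¬ Defective R q) (hUv : ∀ e ∈ R.U, ¬ Defective R e.2 → e.2 ∈ v) :
    Successful R (kclosure R.K v) := by
  have hnd : ∀ p ∈ kclosure R.K v, ¬ Defective R p := fun p hp => by
    obtain ⟨q, hq, hqp⟩ := mem_kclosure.1 hp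
    exact not_defective_of_reflTransGen hqp (hv q hq)
  refine ⟨Finset.disjoint_left.2 fun p hp hpB => hnd p hp (.of_mem_B hpB),
    fun e he h₁ => ?_, by simp [hC]⟩
  rcases Finset.mem_union.1 he with heK | heU
  · exact mem_kclosure_of_mem heK h₁
  · exact subset_kclosure (hUv e heU (not_defective_of_mem_dep he (hnd _ h₁)))

open Classical in
/-- Apply the covering property to `S₁` = the defective packages and `S₂` = `p` together
with the non-defective heads of unknown dependencies. -/
theorem exists_mem_covering_of_not_defective {u d : ℕ} (hU : R.U.card ≤ u)
    (hd : (DefSet R).ncard ≤ d) {F : Finset (Finset (Fin n))} (hF : CoveringLE n d (u + 1) F)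
    {p : Fin n} (hp : ¬ Defective R p) :
    ∃ v ∈ F, (∀ q ∈ v, ¬ Defective R q) ∧ p ∈ v ∧
      ∀ e ∈ R.U, ¬ Defective R e.2 → e.2 ∈ v := by
  set S₂ := insert p ((R.U.image Prod.snd).filter fun q => ¬ Defective R q)
  have hS₂ : ∀ q ∈ S₂, ¬ Defective R q := by
    simp only [S₂, Finset.mem_insert, Finset.mem_filter]
    rintro q (rfl | ⟨-, hq⟩) <;> assumption
  have hS₂card : S₂.card ≤ u + 1 := calc
    S₂.card ≤ ((R.U.image Prod.snd).filter fun q => ¬ Defective R q).card + 1 :=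
      Finset.card_insert_le _ _
    _ ≤ R.U.card + 1 := by grw [Finset.card_filter_le, Finset.card_image_le]
    _ ≤ u + 1 := by omega
  obtain ⟨v, hvF, hvS₁, hS₂v⟩ := hF (DefSet R).toFinset S₂
    (Finset.disjoint_left.2 fun q hq hq₂ => hS₂ q hq₂ (Set.mem_toFinset.1 hq))
    (by rwa [← Set.ncard_eq_toFinset_card']) (Finset.card_pos.2 ⟨p, Finset.mem_insert_self _ _⟩)
    hS₂card
  refine ⟨v, hvF, fun q hq hdq => Finset.disjoint_left.1 hvS₁ hq (Set.mem_toFinset.2 hdq),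
    hS₂v (Finset.mem_insert_self _ _), fun e he he₂ => hS₂v ?_⟩
  exact Finset.mem_insert_of_mem (Finset.mem_filter.2 ⟨Finset.mem_image_of_mem _ he, he₂⟩)

end Queries

theorem maximal_subrepo_upper_bound_general (n u d : ℕ) (R : Repo n)
    (hC : R.C = ∅) (hU : R.U.card ≤ u)
    (hd : (DefSet R).ncard ≤ d)
    (F : Finset (Finset (Fin n))) (hF : CoveringLE n d (u + 1) F)
    (M : Finset (Fin n))
    (hM : ∀ p : Fin n, p ∈ M ↔ Sset R (F.image (kclosure R.K)) p ≠ ∅) :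
    Successful R M ∧ (∀ I : Finset (Fin n), Successful R I → I ⊆ M) ∧
      (∀ I : Finset (Fin n), Successful R I → I.card = M.card → I = M) := by
  have hsub : ∀ I : Finset (Fin n), Successful R I → I ⊆ M := fun I hI p hp => by
    obtain ⟨v, hvF, hv, hpv, hUv⟩ :=
      exists_mem_covering_of_not_defective hU hd hF (not_defective_iff.2 ⟨I, hI, hp⟩)
    exact (hM p).2 (Set.nonempty_iff_ne_empty.1 ⟨_, Finset.mem_image_of_mem _ hvF,
      successful_kclosure hC hv hUv, subset_kclosure hpv⟩)
  have hMsucc : Successful R M := successful_of_forall_mem_exists_subset hC fun p hp => by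
    obtain ⟨t, ⟨htT, ht, hpt⟩⟩ := Set.nonempty_iff_ne_empty.2 ((hM p).1 hp)
    exact ⟨t, ht, hpt, fun q hq => (hM q).2 (Set.nonempty_iff_ne_empty.1 ⟨t, htT, ht, hq⟩)⟩
  exact ⟨hMsucc, hsub, fun I hI h => Finset.eq_of_subset_of_card_le (hsub I hI) h.ge⟩

/-- With acyclic known dependencies, no conflicts, at most `u` unknown
dependencies and at most `d` defects, the `K`-closures of a
`(≤d, ≤u+1)`-covering family determine the maximal sub-repository: the set `M`
of packages with a successful query is a successful installation containing
every successful installation, hence the unique maximum-size one. -/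
theorem maximal_subrepo_upper_bound (n u d : ℕ) (R : Repo n)
    (hacyc : Acyclic R.K) (hC : R.C = ∅) (hU : R.U.card ≤ u)
    (hd : (DefSet R).ncard ≤ d)
    (F : Finset (Finset (Fin n))) (hF : CoveringLE n d (u + 1) F)
    (M : Finset (Fin n))
    (hM : ∀ p : Fin n, p ∈ M ↔ Sset R (F.image (kclosure R.K)) p ≠ ∅) :
    Successful R M ∧ (∀ I : Finset (Fin n), Successful R I → I ⊆ M) ∧
      (∀ I : Finset (Fin n), Successful R I → I.card = M.card → I = M) :=
  maximal_subrepo_upper_bound_general n u d R hC hU hd F hF M hM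
end

section
/- Let u, d ≥ 1 and n ≥ u + d. Let T be a family of subsets of P = {1,…,n} with the following property: for every two repositories on P with K = ∅, C = ∅, at most u unknown dependencies (|U| ≤ u) and at most d defective packages each, if every query in T receives identical feedback under both repositories then the two repositories have the same set of defective packages. Then |T| ≥ C(u+d, d) − 1. -/
/-!
Fix a set `A` of `u + d` packages. For each `u`-subset `E ⊆ A`, let `R_E` be the repository
whose unknown dependencies form a directed cycle through `E` and whose broken packages are
`A \ E`. A query `t` succeeds in `R_E` exactly when `t ∩ A` is `∅` or `E`, and the defective
packages of `R_E` are `A \ E`. If no query `t ∈ T` has `t ∩ A = E`, then `t` succeeds in `R_E`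
iff `t ∩ A = ∅`, so two distinct such `E` would give indistinguishable repositories with
different defective sets. Hence all but at most one of the `C(u + d, u)` sets `E` lie in the
image of `T` under `t ↦ t ∩ A`.
-/

open Finset

theorem Set.eq_univ_of_mapsTo_finRotate {m : ℕ} {s : Set (Fin m)}
    (hs : Set.MapsTo (finRotate m) s s) (hne : s.Nonempty) : s = Set.univ := by
  obtain ⟨i, hi⟩ := hne
  refine Set.eq_univ_of_forall fun j => ?_
  have := i.neZero
  have hj : (finRotate m)^[(j - i).val] i = j := by
    rw [← finCycle_eq_finRotate_iterate, finCycle_apply, add_sub_cancel]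
  exact hj ▸ hs.iterate _ hi

section CycleEdges

variable {α : Type*} [LinearOrder α]

noncomputable def cycleEdges (E : Finset α) : Finset (α × α) :=
  univ.image fun i => ((E.orderIsoOfFin rfl i : α), (E.orderIsoOfFin rfl (finRotate _ i) : α))

theorem card_cycleEdges_le (E : Finset α) : #(cycleEdges E) ≤ #E :=
  card_image_le.trans_eq (by simp)

theorem forall_cycleEdges_imp_iff (E t : Finset α) :
    (∀ e ∈ cycleEdges E, e.1 ∈ t → e.2 ∈ t) ↔ Disjoint t E ∨ E ⊆ t := by
  set σ := E.orderIsoOfFin rfl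
  simp only [cycleEdges, mem_image, mem_univ, true_and, forall_exists_index,
    forall_apply_eq_imp_iff]
  constructor
  · intro h
    refine or_iff_not_imp_left.2 fun hmeet => ?_
    obtain ⟨x, hxt, hxE⟩ := not_disjoint_iff.1 hmeet
    have huniv : {i | (σ i : α) ∈ t} = Set.univ :=
      Set.eq_univ_of_mapsTo_finRotate (fun i hi => h i hi) ⟨σ.symm ⟨x, hxE⟩, by simpa using hxt⟩
    intro y hy
    simpa using Set.eq_univ_iff_forall.1 huniv (σ.symm ⟨y, hy⟩)
  · rintro (hdisj | hsub) i hi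
    · exact absurd (σ i).2 (disjoint_left.1 hdisj hi)
    · exact hsub (σ _).2

end CycleEdges

section CycleRepo

variable {n : ℕ}

noncomputable def cycleRepo (A E : Finset (Fin n)) : Repo n :=
  ⟨∅, cycleEdges E, ∅, A \ E, by simp⟩

theorem successful_cycleRepo_iff {A E : Finset (Fin n)} (hEA : E ⊆ A) (t : Finset (Fin n)) :
    Successful (cycleRepo A E) t ↔ t ∩ A = ∅ ∨ t ∩ A = E := by
  simp only [Successful, cycleRepo, empty_union, forall_cycleEdges_imp_iff, notMem_empty,
    IsEmpty.forall_iff, implies_true, and_true]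
  rw [disjoint_iff_inter_eq_empty, ← inter_sdiff_assoc, sdiff_eq_empty_iff_subset]
  constructor
  · rintro ⟨htA, hdisj | hEt⟩
    · exact Or.inl (subset_empty.1
        (disjoint_iff_inter_eq_empty.1 hdisj ▸ subset_inter inter_subset_left htA))
    · exact Or.inr (htA.antisymm (subset_inter hEt hEA))
  · rintro (h | h)
    · exact ⟨h ▸ empty_subset E, Or.inl ((disjoint_iff_inter_eq_empty.2 h).mono_right hEA)⟩
    · exact ⟨h.le, Or.inr (h ▸ inter_subset_left)⟩

theorem defSet_cycleRepo {A E : Finset (Fin n)} (hEA : E ⊆ A) :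
    DefSet (cycleRepo A E) = ↑(A \ E) := by
  ext p
  refine ⟨fun hp => by_contra fun hpAE => hp (insert p E) ?_ (mem_insert_self p E),
    fun hp I hI hpI => disjoint_left.1 hI.1 hpI hp⟩
  rw [successful_cycleRepo_iff hEA]
  right
  grind

end CycleRepo

def IdentifiesDefects (n u d : ℕ) (T : Finset (Finset (Fin n))) : Prop :=
  ∀ R₁ R₂ : Repo n,
    R₁.K = ∅ → R₂.K = ∅ → R₁.C = ∅ → R₂.C = ∅ →
    R₁.U.card ≤ u → R₂.U.card ≤ u →
    (DefSet R₁).ncard ≤ d → (DefSet R₂).ncard ≤ d →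
    (∀ t ∈ T, Successful R₁ t ↔ Successful R₂ t) →
    DefSet R₁ = DefSet R₂

section LowerBound

variable {n u d : ℕ} {T : Finset (Finset (Fin n))} {A : Finset (Fin n)}

theorem IdentifiesDefects.eq_of_notMem_image_inter (hT : IdentifiesDefects n u d T)
    (hA : #A = u + d) {E₁ E₂ : Finset (Fin n)}
    (hE₁ : E₁ ∈ A.powersetCard u) (hE₂ : E₂ ∈ A.powersetCard u)
    (hT₁ : E₁ ∉ T.image (· ∩ A)) (hT₂ : E₂ ∉ T.image (· ∩ A)) : E₁ = E₂ := by
  rw [mem_powersetCard] at hE₁ hE₂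
  have hdef {E} (hE : E ⊆ A ∧ #E = u) : (DefSet (cycleRepo A E)).ncard ≤ d := by
    rw [defSet_cycleRepo hE.1, Set.ncard_coe_finset, card_sdiff_of_subset hE.1, hA, hE.2]
    omega
  have hsucc {E} (hE : E ⊆ A) (hT : E ∉ T.image (· ∩ A)) (t) (ht : t ∈ T) :
      Successful (cycleRepo A E) t ↔ t ∩ A = ∅ := by
    rw [successful_cycleRepo_iff hE, or_iff_left fun h => hT (mem_image.2 ⟨t, ht, h⟩)]
  have hsame := hT (cycleRepo A E₁) (cycleRepo A E₂) rfl rfl rfl rfl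
    ((card_cycleEdges_le E₁).trans_eq hE₁.2) ((card_cycleEdges_le E₂).trans_eq hE₂.2)
    (hdef hE₁) (hdef hE₂) fun t ht => by rw [hsucc hE₁.1 hT₁ t ht, hsucc hE₂.1 hT₂ t ht]
  rw [defSet_cycleRepo hE₁.1, defSet_cycleRepo hE₂.1, coe_inj] at hsame
  rw [← Finset.sdiff_sdiff_eq_self hE₁.1, hsame, Finset.sdiff_sdiff_eq_self hE₂.1]

theorem IdentifiesDefects.card_powersetCard_le (hT : IdentifiesDefects n u d T)
    (hA : #A = u + d) : #(A.powersetCard u) ≤ #T + 1 :=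
  calc #(A.powersetCard u)
      ≤ #(A.powersetCard u \ T.image (· ∩ A)) + #(T.image (· ∩ A)) :=
        card_le_card_sdiff_add_card
    _ ≤ 1 + #T := by
        refine add_le_add (card_le_one.2 fun E₁ h₁ E₂ h₂ => ?_) card_image_le
        rw [mem_sdiff] at h₁ h₂
        exact hT.eq_of_notMem_image_inter hA h₁.1 h₂.1 h₁.2 h₂.2
    _ = #T + 1 := add_comm _ _

end LowerBound

theorem adaptive_maximal_subrepo_lower_bound_general (n u d : ℕ)
    (hn : u + d ≤ n)
    (T : Finset (Finset (Fin n)))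
    (hT : ∀ R₁ R₂ : Repo n,
      R₁.K = ∅ → R₂.K = ∅ → R₁.C = ∅ → R₂.C = ∅ →
      R₁.U.card ≤ u → R₂.U.card ≤ u →
      (DefSet R₁).ncard ≤ d → (DefSet R₂).ncard ≤ d →
      (∀ t ∈ T, Successful R₁ t ↔ Successful R₂ t) →
      DefSet R₁ = DefSet R₂) :
    (u + d).choose d - 1 ≤ T.card := by
  obtain ⟨A, -, hA⟩ := exists_subset_card_eq (s := (univ : Finset (Fin n))) (by simpa using hn)
  have hbound : #(A.powersetCard u) ≤ #T + 1 := IdentifiesDefects.card_powersetCard_le hT hA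
  rw [card_powersetCard, hA, Nat.choose_symm_add] at hbound
  omega

/-- Adaptive-style counting lower bound: any query family solving Maximal
Sub-repository with at most `u` unknown dependencies and at most `d` defects
must have at least `C(u+d, d) - 1` queries. -/
theorem adaptive_maximal_subrepo_lower_bound (n u d : ℕ)
    (hu : 1 ≤ u) (hd : 1 ≤ d) (hn : u + d ≤ n)
    (T : Finset (Finset (Fin n)))
    (hT : ∀ R₁ R₂ : Repo n,
      R₁.K = ∅ → R₂.K = ∅ → R₁.C = ∅ → R₂.C = ∅ →
      R₁.U.card ≤ u → R₂.U.card ≤ u →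
      (DefSet R₁).ncard ≤ d → (DefSet R₂).ncard ≤ d →
      (∀ t ∈ T, Successful R₁ t ↔ Successful R₂ t) →
      DefSet R₁ = DefSet R₂) :
    (u + d).choose d - 1 ≤ T.card :=
  adaptive_maximal_subrepo_lower_bound_general n u d hn T hT
end

section
/- Let n ≥ 2, let P = {p, a₁, …, a_{n−1}}, and let K = {(a_{i+1}, a_i) : 1 ≤ i ≤ n−2} be the directed path of known dependencies among the a_i. Let T be a family of subsets of P with the following property: for every two repositories on P having this K, U = ∅, B = ∅, and at most one conflict (|C| ≤ 1) each, if every query in T receives identical feedback under both repositories then the two repositories have the same conflict set C. Then |T| ≥ n − 1. -/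
/-- The directed path of known dependencies among `a₁, …, a_{n-1}`
(package `0` is `p`; edges `(j+1, j)` for `j ≥ 1`). -/
def KpathTail (n : ℕ) : Finset (Fin n × Fin n) :=
  Finset.univ.filter (fun e => (e.1 : ℕ) = (e.2 : ℕ) + 1 ∧ 1 ≤ (e.2 : ℕ))

/-!
Take package `0` as `p` and let `Rᵢ`, for `1 ≤ i ≤ n - 1`, be the repository whose only conflict
is `{0, i}`. A query tells `Rᵢ` apart from `Rᵢ₊₁` (from the conflict-free repository when
`i = n - 1`) only if it is closed under the path, contains `0` and `i`, and omits `i + 1`; being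
closed, it then has maximum `i`. So the queries of `T` realise all `n - 1` maxima `1, …, n - 1`.
-/

open Finset

namespace KpathTail

variable {n : ℕ}

def repo (C : Finset (Sym2 (Fin n))) (hC : ∀ s ∈ C, ¬ s.IsDiag) : Repo n :=
  ⟨KpathTail n, ∅, C, ∅, hC⟩

def IsClosed (t : Finset (Fin n)) : Prop :=
  ∀ e ∈ KpathTail n, e.1 ∈ t → e.2 ∈ t

lemma successful_repo_iff {C : Finset (Sym2 (Fin n))} {hC : ∀ s ∈ C, ¬ s.IsDiag}
    {t : Finset (Fin n)} :
    Successful (repo C hC) t ↔ IsClosed t ∧ ∀ s ∈ C, ¬ ∀ x ∈ s, x ∈ t := by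
  simp [Successful, repo, IsClosed]

lemma IsClosed.mem_of_le {t : Finset (Fin n)} (ht : IsClosed t) {i j : Fin n}
    (hi : (i : ℕ) ≠ 0) (hij : i ≤ j) (hj : j ∈ t) : i ∈ t := by
  obtain ⟨k, hk⟩ := Nat.exists_eq_add_of_le (Fin.le_def.mp hij)
  induction k generalizing j with
  | zero => exact Fin.ext hk ▸ hj
  | succ k ih =>
    have hlt : (i : ℕ) + k < n := by omega
    refine ih (j := ⟨i + k, hlt⟩) (Fin.le_def.mpr (by simp)) ?_ rfl
    exact ht (j, ⟨i + k, hlt⟩) (by simp [KpathTail]; omega) hj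

lemma IsClosed.max_eq {t : Finset (Fin n)} (ht : IsClosed t) {i : Fin n} (hit : i ∈ t)
    (hsucc : ∀ j : Fin n, (j : ℕ) = i + 1 → j ∉ t) : t.max = i := by
  refine le_antisymm (Finset.max_le fun k hk => WithBot.coe_le_coe.mpr ?_) (le_max hit)
  by_contra! hik
  have hlt : (i : ℕ) + 1 < n := by have := Fin.lt_def.mp hik; omega
  exact hsucc ⟨i + 1, hlt⟩ rfl (ht.mem_of_le (Nat.succ_ne_zero _) (Fin.lt_def.mp hik) hk)

def Separates (T : Finset (Finset (Fin n))) : Prop :=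
  ∀ (C₁ C₂ : Finset (Sym2 (Fin n))) (h₁ : ∀ s ∈ C₁, ¬ s.IsDiag) (h₂ : ∀ s ∈ C₂, ¬ s.IsDiag),
    C₁.card ≤ 1 → C₂.card ≤ 1 → C₁ ≠ C₂ →
      ∃ t ∈ T, ¬ (Successful (repo C₁ h₁) t ↔ Successful (repo C₂ h₂) t)

variable [NeZero n]

lemma not_isDiag_of_mem_singleton {i : Fin n} (hi : i ≠ 0) :
    ∀ s ∈ ({s(0, i)} : Finset (Sym2 (Fin n))), ¬ s.IsDiag := by
  simpa using hi.symm

lemma successful_repo_singleton_iff {i : Fin n} (hi : i ≠ 0) {t : Finset (Fin n)} :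
    Successful (repo {s(0, i)} (not_isDiag_of_mem_singleton hi)) t ↔
      IsClosed t ∧ ¬ (0 ∈ t ∧ i ∈ t) := by
  simp only [successful_repo_iff, mem_singleton, forall_eq, Sym2.forall_mem_pair]

lemma Separates.exists_max_eq {T : Finset (Finset (Fin n))} (hT : Separates T) {i : Fin n}
    (hi : i ≠ 0) : ∃ t ∈ T, t.max = i := by
  have hi₀ : (i : ℕ) ≠ 0 := Fin.val_ne_iff.mpr hi
  by_cases hlast : (i : ℕ) + 1 < n
  · set j : Fin n := ⟨i + 1, hlast⟩
    have hj : j ≠ 0 := Fin.ne_of_val_ne (by simp [j])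
    have hij : s(0, i) ≠ s(0, j) := fun h => by
      rcases Sym2.eq_iff.mp h with ⟨-, h⟩ | ⟨h, -⟩
      · exact absurd (congrArg Fin.val h) (by simp [j])
      · exact hj h.symm
    obtain ⟨t, htT, ht⟩ := hT _ _ (not_isDiag_of_mem_singleton hi)
      (not_isDiag_of_mem_singleton hj) (by simp) (by simp) (by simpa using hij)
    rw [successful_repo_singleton_iff hi, successful_repo_singleton_iff hj] at ht
    have hcl : IsClosed t := by tauto
    have hji : j ∈ t → i ∈ t := hcl.mem_of_le hi₀ (Fin.le_def.mpr (by simp [j]))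
    have hjt : j ∉ t := by tauto
    exact ⟨t, htT, hcl.max_eq (by tauto) fun k hk => by rwa [show k = j from Fin.ext hk]⟩
  · obtain ⟨t, htT, ht⟩ := hT _ ∅ (not_isDiag_of_mem_singleton hi) (by simp) (by simp)
      (by simp) (by simp)
    simp only [successful_repo_singleton_iff hi, successful_repo_iff, notMem_empty,
      IsEmpty.forall_iff, implies_true, and_true] at ht
    have hcl : IsClosed t := by tauto
    exact ⟨t, htT, hcl.max_eq (by tauto) fun k hk => absurd k.isLt (by omega)⟩

lemma Separates.card_le {T : Finset (Finset (Fin n))} (hT : Separates T) :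
    n - 1 ≤ T.card :=
  calc n - 1 = (univ.erase (0 : Fin n)).card := by simp
    _ ≤ (T.image Finset.max).card := by
      refine card_le_card_of_injOn (fun i => (i : WithBot (Fin n))) (fun i hi => ?_)
        WithBot.coe_injective.injOn
      obtain ⟨t, htT, hmax⟩ := hT.exists_max_eq (mem_erase.mp hi).1
      exact mem_image.mpr ⟨t, htT, hmax⟩
    _ ≤ T.card := card_image_le

end KpathTail

theorem conflict_learning_linear_lower_bound_general (n : ℕ)
    (T : Finset (Finset (Fin n)))
    (hT : ∀ R₁ R₂ : Repo n,
      R₁.K = KpathTail n → R₂.K = KpathTail n →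
      R₁.U = ∅ → R₂.U = ∅ →
      R₁.B = ∅ → R₂.B = ∅ →
      R₁.C.card ≤ 1 → R₂.C.card ≤ 1 →
      (∀ t ∈ T, Successful R₁ t ↔ Successful R₂ t) →
      R₁.C = R₂.C) :
    n - 1 ≤ T.card := by
  cases n with
  | zero => simp
  | succ m =>
    refine KpathTail.Separates.card_le fun C₁ C₂ h₁ h₂ hC₁ hC₂ hne => ?_
    by_contra! hsame
    exact hne (hT _ _ rfl rfl rfl rfl rfl rfl hC₁ hC₂ hsame)

/-- Learning a single conflict requires a linear number of queries: any query
family distinguishing the conflict sets of all repositories over the path with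
no unknown dependencies, no broken packages and at most one conflict has at
least `n - 1` queries. -/
theorem conflict_learning_linear_lower_bound (n : ℕ) (hn : 2 ≤ n)
    (T : Finset (Finset (Fin n)))
    (hT : ∀ R₁ R₂ : Repo n,
      R₁.K = KpathTail n → R₂.K = KpathTail n →
      R₁.U = ∅ → R₂.U = ∅ →
      R₁.B = ∅ → R₂.B = ∅ →
      R₁.C.card ≤ 1 → R₂.C.card ≤ 1 →
      (∀ t ∈ T, Successful R₁ t ↔ Successful R₂ t) →
      R₁.C = R₂.C) :
    n - 1 ≤ T.card :=
  conflict_learning_linear_lower_bound_general n T hT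
end

section
/- Let d ≥ 0, c ≥ 1 and n ≥ d + c + 1. Let T be a family of subsets of P = {1,…,n} with the following property: for every two repositories on P with K = ∅, U = ∅, at most d defective packages, and at most c weakly-conflicting pairs of non-defective packages each, if every query in T receives identical feedback under both repositories then the two repositories have the same weak-conflict relation. Then T is an (n, d+c−1, 2)-cover-free family. -/
/-!
If `T` is not cover-free, there are `S₁` with `|S₁| = d + c - 1` and `p, q ∉ S₁` such that every
query of `T` containing `p` and `q` meets `S₁`. Split `S₁` into a set `D` of `d` broken packages
and a set `E` of `c - 1` packages each conflicting with `p`. Adding the conflict `{p, q}` to this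
repository changes no feedback on `T`, since a successful query containing `p` avoids `D ∪ E`.
Both repositories respect the bounds `d` and `c`, yet only one of them makes `p` and `q` weakly
conflict.
-/

namespace Repo

variable {n : ℕ}

def addConflict (R : Repo n) {p q : Fin n} (hpq : p ≠ q) : Repo n :=
  { R with
    C := insert s(p, q) R.C
    hC := by
      simp only [Finset.mem_insert, forall_eq_or_imp, Sym2.mk_isDiag_iff]
      exact ⟨hpq, R.hC⟩ }

def star (D E : Finset (Fin n)) {p : Fin n} (hp : p ∉ E) : Repo n where
  K := ∅
  U := ∅
  C := E.image fun x => s(x, p)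
  B := D
  hC := by
    simp only [Finset.mem_image, forall_exists_index, and_imp, forall_apply_eq_imp_iff₂,
      Sym2.mk_isDiag_iff]
    exact fun x hx hxp => hp (hxp ▸ hx)

end Repo

section NoDependencies

variable {n : ℕ} {R : Repo n}

theorem successful_pair (hK : R.K = ∅) (hU : R.U = ∅) {x y : Fin n} (hx : x ∉ R.B)
    (hy : y ∉ R.B) (hxy : s(x, y) ∉ R.C) : Successful R {x, y} := by
  refine ⟨by simp [hx, hy], by simp [hK, hU], fun s hs hsub => hxy ?_⟩
  induction s using Sym2.ind with
  | _ a b =>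
    have hab : a ≠ b := by simpa using R.hC _ hs
    have ha := hsub a (Sym2.mem_mk_left a b)
    have hb := hsub b (Sym2.mem_mk_right a b)
    simp only [Finset.mem_insert, Finset.mem_singleton] at ha hb
    rcases ha with rfl | rfl <;> rcases hb with rfl | rfl <;> simp_all [Sym2.eq_swap]

theorem defective_iff_mem_B (hK : R.K = ∅) (hU : R.U = ∅) (x : Fin n) :
    Defective R x ↔ x ∈ R.B := by
  refine ⟨fun h => by_contra fun hx => ?_, fun hx I hI hxI => Finset.disjoint_left.mp hI.1 hxI hx⟩
  have hxx : s(x, x) ∉ R.C := fun hs => R.hC _ hs (Sym2.mk_isDiag_iff.mpr rfl)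
  exact h {x, x} (successful_pair hK hU hx hx hxx) (by simp)

theorem ncard_defSet (hK : R.K = ∅) (hU : R.U = ∅) : (DefSet R).ncard = R.B.card := by
  have : DefSet R = R.B := by ext x; exact defective_iff_mem_B hK hU x
  rw [this, Set.ncard_coe_finset]

theorem ncard_weakConflictPairs_le (hK : R.K = ∅) (hU : R.U = ∅) :
    (WeakConflictPairs R).ncard ≤ R.C.card := by
  rw [← Set.ncard_coe_finset]
  refine Set.ncard_le_ncard_of_injOn (fun pq => s(pq.1, pq.2)) ?_ ?_ R.C.finite_toSet
  · rintro ⟨x, y⟩ ⟨-, hx, hy, hxy⟩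
    by_contra hmem
    rw [defective_iff_mem_B hK hU] at hx hy
    exact hxy _ (successful_pair hK hU hx hy hmem) (by simp)
  · rintro ⟨x, y⟩ ⟨hxy, -⟩ ⟨x', y'⟩ ⟨hxy', -⟩ h
    rcases Sym2.mk_eq_mk_iff.mp h with h | h
    · exact h
    · simp only [Prod.swap_prod_mk, Prod.mk.injEq] at h
      obtain ⟨rfl, rfl⟩ := h
      exact absurd (hxy.trans hxy') (lt_irrefl _)

end NoDependencies

section Conflicts

variable {n : ℕ}

theorem weakConflict_of_mem_C (R : Repo n) {x y : Fin n} (h : s(x, y) ∈ R.C) :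
    WeakConflict R x y := fun _ hI hxy =>
  hI.2.2 _ h fun _ hz => (Sym2.mem_iff.mp hz).elim (· ▸ hxy.1) (· ▸ hxy.2)

theorem successful_addConflict_iff (R : Repo n) {p q : Fin n} (hpq : p ≠ q)
    (I : Finset (Fin n)) :
    Successful (R.addConflict hpq) I ↔ Successful R I ∧ ¬ (p ∈ I ∧ q ∈ I) := by
  simp only [Successful, Repo.addConflict, Finset.mem_insert, forall_eq_or_imp,
    Sym2.mem_iff, forall_eq]
  tauto

theorem Successful.disjoint_of_star {D E : Finset (Fin n)} {p : Fin n} {hp : p ∉ E}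
    {I : Finset (Fin n)} (hI : Successful (Repo.star D E hp) I) (hpI : p ∈ I) :
    Disjoint I (D ∪ E) := by
  refine Finset.disjoint_union_right.mpr ⟨hI.1, Finset.disjoint_right.mpr fun x hx hxI => ?_⟩
  exact weakConflict_of_mem_C _ (Finset.mem_image_of_mem _ hx) I hI ⟨hxI, hpI⟩

theorem successful_addConflict_star_iff {D E : Finset (Fin n)} {p q : Fin n} (hp : p ∉ E)
    (hpq : p ≠ q) {T : Finset (Finset (Fin n))}
    (hT : ∀ t ∈ T, p ∈ t → q ∈ t → ¬ Disjoint t (D ∪ E)) {t : Finset (Fin n)} (ht : t ∈ T) :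
    Successful ((Repo.star D E hp).addConflict hpq) t ↔ Successful (Repo.star D E hp) t :=
  (successful_addConflict_iff _ hpq t).trans <| and_iff_left_of_imp fun hI hpqt =>
    hT t ht hpqt.1 hpqt.2 (hI.disjoint_of_star hpqt.1)

theorem Repo.mk_notMem_C_star {D E : Finset (Fin n)} {p q : Fin n} (hp : p ∉ E) (hq : q ∉ E) :
    s(p, q) ∉ (Repo.star D E hp).C := by
  simp only [Repo.star, Finset.mem_image, Sym2.eq_iff, not_exists, not_and]
  rintro x hx (⟨rfl, -⟩ | ⟨rfl, -⟩)
  exacts [hp hx, hq hx]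

end Conflicts

theorem full_learning_conflicts_CFF_lower_bound_general (n d c : ℕ) (hc : 1 ≤ c)
    (T : Finset (Finset (Fin n)))
    (hT : ∀ R₁ R₂ : Repo n,
      R₁.K = ∅ → R₂.K = ∅ → R₁.U = ∅ → R₂.U = ∅ →
      (DefSet R₁).ncard ≤ d → (DefSet R₂).ncard ≤ d →
      (WeakConflictPairs R₁).ncard ≤ c → (WeakConflictPairs R₂).ncard ≤ c →
      (∀ t ∈ T, Successful R₁ t ↔ Successful R₂ t) →
      (∀ p q : Fin n, WeakConflict R₁ p q ↔ WeakConflict R₂ p q)) :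
    IsCFF n (d + c - 1) 2 T := by
  intro S₁ S₂ hdisj hS₁ hS₂
  by_contra! hcover
  obtain ⟨p, q, hpq, rfl⟩ := Finset.card_eq_two.mp hS₂
  have hp : p ∉ S₁ := Finset.disjoint_right.mp hdisj (by simp)
  have hq : q ∉ S₁ := Finset.disjoint_right.mp hdisj (by simp)
  obtain ⟨D, hDS₁, hD⟩ := Finset.exists_subset_card_eq (s := S₁) (n := d) (by omega)
  have hE : (S₁ \ D).card = c - 1 := by rw [Finset.card_sdiff_of_subset hDS₁]; omega
  have hpE : p ∉ S₁ \ D := fun h => hp (Finset.sdiff_subset h)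
  have hqE : q ∉ S₁ \ D := fun h => hq (Finset.sdiff_subset h)
  set R := Repo.star D (S₁ \ D) hpE
  have hRC : R.C.card ≤ c - 1 := hE ▸ Finset.card_image_le
  have hmeet : ∀ t ∈ T, p ∈ t → q ∈ t → ¬ Disjoint t (D ∪ (S₁ \ D)) := fun t ht hpt hqt h =>
    hcover t ht (Finset.union_sdiff_of_subset hDS₁ ▸ h) (by simp [Finset.insert_subset_iff, *])
  have hsame := hT (R.addConflict hpq) R rfl rfl rfl rfl
    (by rw [ncard_defSet rfl rfl]; exact hD.le) (by rw [ncard_defSet rfl rfl]; exact hD.le)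
    ((ncard_weakConflictPairs_le rfl rfl).trans ((Finset.card_insert_le _ _).trans (by omega)))
    ((ncard_weakConflictPairs_le rfl rfl).trans (by omega))
    (fun t => successful_addConflict_star_iff hpE hpq hmeet) p q
  exact hsame.mp (weakConflict_of_mem_C _ (Finset.mem_insert_self _ _)) _
    (successful_pair rfl rfl (fun h => hp (hDS₁ h)) (fun h => hq (hDS₁ h))
      (Repo.mk_notMem_C_star hpE hqE)) (by simp)

/-- Any non-adaptive query family solving Full Learning of weak conflicts with
at most `d` defects, at most `c` weakly-conflicting pairs of non-defective
packages, and all dependencies known, is an `(n, d+c-1, 2)`-cover-free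
family. -/
theorem full_learning_conflicts_CFF_lower_bound (n d c : ℕ) (hc : 1 ≤ c)
    (hn : d + c + 1 ≤ n) (T : Finset (Finset (Fin n)))
    (hT : ∀ R₁ R₂ : Repo n,
      R₁.K = ∅ → R₂.K = ∅ → R₁.U = ∅ → R₂.U = ∅ →
      (DefSet R₁).ncard ≤ d → (DefSet R₂).ncard ≤ d →
      (WeakConflictPairs R₁).ncard ≤ c → (WeakConflictPairs R₂).ncard ≤ c →
      (∀ t ∈ T, Successful R₁ t ↔ Successful R₂ t) →
      (∀ p q : Fin n, WeakConflict R₁ p q ↔ WeakConflict R₂ p q)) :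
    IsCFF n (d + c - 1) 2 T :=
  full_learning_conflicts_CFF_lower_bound_general n d c hc T hT
end

section
/- Let P = {1,…,n} and fix a repository on P in which the digraph (P, K) of known dependencies is acyclic, U = ∅, at most d packages are defective, and at most c pairs of non-defective packages weakly conflict. Let F be a family of subsets of P satisfying the (≤d+c, ≤2)-covering property, and let the query family be T = {c(v) : v ∈ F}, where c(v) is the K-closure of v. Then for every package p ∈ P: p is defective if and only if S(p) = ∅. -/
/-- Successful installations are closed under `K`-reachability. -/
lemma reach_mem {n : ℕ} (R : Repo n) {I : Finset (Fin n)}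
    (hI : Successful R I) {q w : Fin n}
    (h : Relation.ReflTransGen (fun x y => (x, y) ∈ R.K) q w) (hq : q ∈ I) :
    w ∈ I := by
  induction h with
  | refl => exact hq
  | tail _ hstep ih => exact hI.2.1 _ (Finset.mem_union_left _ hstep) ih

lemma nondef_of_reach {n : ℕ} (R : Repo n) {q w : Fin n}
    (hq : ¬ Defective R q)
    (h : Relation.ReflTransGen (fun x y => (x, y) ∈ R.K) q w) :
    ¬ Defective R w := by
  simp only [Defective, not_forall] at hq ⊢
  obtain ⟨I, hI⟩ := hq
  push_neg at hI
  exact ⟨I, by push_neg; exact ⟨hI.1, reach_mem R hI.1 h hI.2⟩⟩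

lemma weakconflict_symm {n : ℕ} (R : Repo n) {a b : Fin n}
    (h : WeakConflict R a b) : WeakConflict R b a := by
  intro I hI hab
  exact h I hI ⟨hab.2, hab.1⟩

/-- With acyclic known dependencies, no unknown dependencies, at most `d`
defects and at most `c` weakly-conflicting pairs of non-defective packages,
the `K`-closures of a `(≤d+c, ≤2)`-covering family identify the defects. -/
theorem defect_identification_with_conflicts (n d c : ℕ) (R : Repo n)
    (hacyc : Acyclic R.K) (hU : R.U = ∅)
    (hd : (DefSet R).ncard ≤ d)
    (hc : (WeakConflictPairs R).ncard ≤ c)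
    (F : Finset (Finset (Fin n))) (hF : CoveringLE n (d + c) 2 F) :
    ∀ p : Fin n,
      Defective R p ↔ Sset R (F.image (kclosure R.K)) p = ∅ := by
  classical
  intro p
  constructor
  · intro hdef
    ext t
    simp only [Sset, Set.mem_setOf_eq, Set.mem_empty_iff_false, iff_false,
      not_and]
    intro _ hsucc hpt
    exact hdef t hsucc hpt
  · intro hS
    by_contra hdef
    -- p is not defective; p not in defect set
    have hDfin : (DefSet R).Finite := Set.toFinite _
    have hWfin : (WeakConflictPairs R).Finite := Set.toFinite _
    set D : Finset (Fin n) := hDfin.toFinset with hD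
    set W : Finset (Fin n × Fin n) := hWfin.toFinset with hW
    set g : Fin n × Fin n → Fin n := fun pr => if pr.1 = p then pr.2 else pr.1
      with hg
    set S₁ : Finset (Fin n) := D ∪ W.image g with hS₁
    -- cardinality bound
    have hcard : S₁.card ≤ d + c := by
      calc S₁.card ≤ D.card + (W.image g).card := Finset.card_union_le _ _
        _ ≤ d + c := by
          have h1 : D.card ≤ d := by
            rw [hD, ← Set.ncard_eq_toFinset_card _ hDfin]; exact hd
          have h2 : (W.image g).card ≤ c := by
            calc (W.image g).card ≤ W.card := Finset.card_image_le
              _ ≤ c := by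
                rw [hW, ← Set.ncard_eq_toFinset_card _ hWfin]; exact hc
          omega
    -- p ∉ S₁
    have hpS₁ : p ∉ S₁ := by
      intro hp
      rcases Finset.mem_union.mp hp with hp | hp
      · exact hdef (hDfin.mem_toFinset.mp hp)
      · obtain ⟨pr, hprW, hpr⟩ := Finset.mem_image.mp hp
        have hprW' : pr ∈ WeakConflictPairs R := hWfin.mem_toFinset.mp hprW
        by_cases hcase : pr.1 = p
        · -- g pr = pr.2 = p, but pr.1 < pr.2 so pr.2 ≠ p
          simp only [hg] at hpr
          rw [if_pos hcase] at hpr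
          have hlt := hprW'.1
          rw [hcase, hpr] at hlt
          exact lt_irrefl p hlt
        · simp only [hg, if_neg hcase] at hpr
          exact hcase hpr
    have hdisj : Disjoint S₁ ({p} : Finset (Fin n)) := by
      simp [Finset.disjoint_singleton_right, hpS₁]
    obtain ⟨v, hvF, hvS₁, hpv⟩ := hF S₁ {p} hdisj hcard
      (by simp) (by simp)
    have hpv' : p ∈ v := hpv (Finset.mem_singleton_self p)
    set t : Finset (Fin n) := kclosure R.K v with ht
    have hmem_t : ∀ w : Fin n, w ∈ t ↔
        ∃ q ∈ v, Relation.ReflTransGen (fun x y => (x, y) ∈ R.K) q w := by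
      intro w
      simp [ht, kclosure]
    -- every member of v is non-defective
    have hvnd : ∀ q ∈ v, ¬ Defective R q := by
      intro q hq hqdef
      have : q ∈ S₁ := Finset.mem_union_left _ (hDfin.mem_toFinset.mpr hqdef)
      exact Finset.disjoint_left.mp hvS₁ hq this
    -- v contains no weakly-conflicting pair of non-defective packages
    have hvnw : ∀ x ∈ v, ∀ y ∈ v, x ≠ y → ¬ WeakConflict R x y := by
      intro x hx y hy hxy hwc
      have hbad : ∀ pr ∈ WeakConflictPairs R, pr.1 ∈ v → pr.2 ∈ v → False := by
        intro pr hpr h1 h2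
        have hgin : g pr ∈ S₁ :=
          Finset.mem_union_right _
            (Finset.mem_image_of_mem g (hWfin.mem_toFinset.mpr hpr))
        by_cases hcase : pr.1 = p
        · have : g pr = pr.2 := by simp [hg, hcase]
          exact Finset.disjoint_left.mp hvS₁ h2 (this ▸ hgin)
        · have : g pr = pr.1 := by simp [hg, hcase]
          exact Finset.disjoint_left.mp hvS₁ h1 (this ▸ hgin)
      rcases lt_or_gt_of_ne hxy with hlt | hlt
      · exact hbad (x, y) ⟨hlt, hvnd x hx, hvnd y hy, hwc⟩ hx hy
      · exact hbad (y, x) ⟨hlt, hvnd y hy, hvnd x hx,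
          weakconflict_symm R hwc⟩ hy hx
    -- t is a successful installation
    have hsucc : Successful R t := by
      refine ⟨?_, ?_, ?_⟩
      · -- disjoint from broken packages
        rw [Finset.disjoint_left]
        intro w hwt hwB
        obtain ⟨q, hqv, hreach⟩ := (hmem_t w).mp hwt
        have hwdef : Defective R w := by
          intro I hI hwI
          exact Finset.disjoint_left.mp hI.1 hwI hwB
        exact nondef_of_reach R (hvnd q hqv) hreach hwdef
      · -- closed under dependencies
        intro e he h1
        rw [hU] at he
        simp only [Finset.union_empty] at he
        obtain ⟨q, hqv, hreach⟩ := (hmem_t e.1).mp h1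
        exact (hmem_t e.2).mpr ⟨q, hqv, hreach.tail he⟩
      · -- no conflicts
        intro s hs hall
        induction s using Sym2.inductionOn with
        | hf a b =>
          have hab : a ≠ b := by
            have := R.hC _ hs
            simpa [Sym2.mk_isDiag_iff] using this
          have haT : a ∈ t := hall a (by simp)
          have hbT : b ∈ t := hall b (by simp)
          obtain ⟨qa, hqa, hra⟩ := (hmem_t a).mp haT
          obtain ⟨qb, hqb, hrb⟩ := (hmem_t b).mp hbT
          have hwc_ab : WeakConflict R a b := by
            intro I hI ⟨haI, hbI⟩
            refine hI.2.2 _ hs ?_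
            intro x hx
            rcases Sym2.mem_iff.mp hx with rfl | rfl
            · exact haI
            · exact hbI
          by_cases hqs : qa = qb
          · -- qa is defective, contradiction
            subst hqs
            refine hvnd qa hqa ?_
            intro I hI hqI
            exact hwc_ab I hI ⟨reach_mem R hI hra hqI, reach_mem R hI hrb hqI⟩
          · -- qa and qb weakly conflict, contradiction with hvnw
            refine hvnw qa hqa qb hqb hqs ?_
            intro I hI ⟨hqaI, hqbI⟩
            exact hwc_ab I hI ⟨reach_mem R hI hra hqaI,
              reach_mem R hI hrb hqbI⟩
    have hpt : p ∈ t := (hmem_t p).mpr ⟨p, hpv', Relation.ReflTransGen.refl⟩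
    have : t ∈ Sset R (F.image (kclosure R.K)) p :=
      ⟨Finset.mem_image_of_mem _ hvF, hsucc, hpt⟩
    rw [hS] at this
    exact this
end

section
/- Let n ≥ 2, let P = {a₁,…,a_n}, and let K = {(a_i, a_{i−1}) : 2 ≤ i ≤ n} be the directed path of known dependencies. Let T be a family of subsets of P with the following property: for every two repositories on P having this K, B = ∅, C = ∅, and at most one unknown dependency (|U| ≤ 1) each, if every query in T receives identical feedback under both repositories then the two repositories have the same unknown dependency set U. Then |T| ≥ n − 1. -/
def R0 (n : ℕ) : Repo n := ⟨Kpath n, ∅, ∅, ∅, by simp⟩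

def R1 (n : ℕ) (p q : Fin n) : Repo n := ⟨Kpath n, {(p, q)}, ∅, ∅, by simp⟩

lemma succ_R0_iff {n : ℕ} (t : Finset (Fin n)) :
    Successful (R0 n) t ↔ ∀ p q : Fin n, (p : ℕ) = (q : ℕ) + 1 → p ∈ t → q ∈ t := by
  unfold Successful R0 Kpath
  simp only [Finset.union_empty, Finset.mem_filter, Finset.mem_univ, true_and,
    Finset.notMem_empty, Finset.disjoint_empty_right, IsEmpty.forall_iff,
    forall_const, and_true, false_implies, implies_true]
  constructor
  · intro h p q hpq hp; exact h (p, q) hpq hp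
  · intro h e he h1; exact h e.1 e.2 he h1

lemma succ_R1_iff {n : ℕ} (t : Finset (Fin n)) (p q : Fin n) :
    Successful (R1 n p q) t ↔ Successful (R0 n) t ∧ (p ∈ t → q ∈ t) := by
  unfold Successful R1 R0
  simp only [Finset.union_empty, Finset.mem_union, Finset.mem_singleton,
    Finset.notMem_empty, Finset.disjoint_empty_right, IsEmpty.forall_iff,
    forall_const, and_true, true_and, false_implies, implies_true]
  constructor
  · intro h
    refine ⟨fun e he => h e (Or.inl he), fun hp => h (p, q) (Or.inr rfl) hp⟩
  · rintro ⟨h1, h2⟩ e (he | he) hp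
    · exact h1 e he hp
    · subst he; exact h2 hp

lemma descend {n : ℕ} {t : Finset (Fin n)}
    (h : ∀ p q : Fin n, (p : ℕ) = (q : ℕ) + 1 → p ∈ t → q ∈ t) :
    ∀ m : ℕ, ∀ y : Fin n, y ∈ t → ∀ x : Fin n, (x : ℕ) + m = (y : ℕ) → x ∈ t := by
  intro m
  induction m with
  | zero =>
    intro y hy x hx
    have : x = y := Fin.ext (by omega)
    rwa [this]
  | succ m ih =>
    intro y hy x hx
    have hx1 : (x : ℕ) + 1 < n := by have := y.isLt; omega
    have hmem : (⟨(x : ℕ) + 1, hx1⟩ : Fin n) ∈ t := ih y hy _ (by simp; omega)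
    exact h ⟨(x : ℕ) + 1, hx1⟩ x rfl hmem


/-- Learning a single unknown dependency requires a linear number of queries:
any query family distinguishing the unknown-dependency sets of all
repositories over the path with no defects, no conflicts and at most one
unknown dependency has at least `n - 1` queries. -/
theorem dependency_learning_linear_lower_bound (n : ℕ) (hn : 2 ≤ n)
    (T : Finset (Finset (Fin n)))
    (hT : ∀ R₁ R₂ : Repo n,
      R₁.K = Kpath n → R₂.K = Kpath n →
      R₁.B = ∅ → R₂.B = ∅ →
      R₁.C = ∅ → R₂.C = ∅ →
      R₁.U.card ≤ 1 → R₂.U.card ≤ 1 →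
      (∀ t ∈ T, Successful R₁ t ↔ Successful R₂ t) →
      R₁.U = R₂.U) :
    n - 1 ≤ T.card := by
  have key : ∀ i : ℕ, i + 1 < n →
      (Finset.univ.filter (fun x : Fin n => (x : ℕ) ≤ i)) ∈ T := by
    intro i hi
    have hi' : i < n := by omega
    set p : Fin n := ⟨i, hi'⟩ with hp
    set q : Fin n := ⟨i + 1, hi⟩ with hq
    by_contra hmem
    have hfeed : ∀ t ∈ T, Successful (R0 n) t ↔ Successful (R1 n p q) t := by
      intro t ht
      rw [succ_R1_iff]
      constructor
      · intro h0
        refine ⟨h0, fun hpt => ?_⟩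
        by_contra hqt
        -- then t is exactly the initial segment {x : x ≤ i}
        have hdes := descend (succ_R0_iff t |>.mp h0)
        have hteq : t = Finset.univ.filter (fun x : Fin n => (x : ℕ) ≤ i) := by
          ext x
          simp only [Finset.mem_filter, Finset.mem_univ, true_and]
          constructor
          · intro hx
            by_contra hxi
            have : q ∈ t := hdes ((x : ℕ) - (i + 1)) x hx q (by simp [hq]; omega)
            exact hqt this
          · intro hx
            exact hdes (i - (x : ℕ)) p hpt x (by simp [hp]; omega)
        rw [hteq] at ht
        exact hmem ht
      · rintro ⟨h0, _⟩; exact h0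
    have := hT (R0 n) (R1 n p q) rfl rfl rfl rfl rfl rfl (by simp [R0]) (by simp [R1])
      hfeed
    have h' : (∅ : Finset (Fin n × Fin n)) = {(p, q)} := by simpa [R0, R1] using this
    exact Finset.singleton_ne_empty (p, q) h'.symm
  -- count the n-1 distinct initial segments in T
  have hsub : (Finset.range (n - 1)).image
      (fun i => Finset.univ.filter (fun x : Fin n => (x : ℕ) ≤ i)) ⊆ T := by
    intro t ht
    simp only [Finset.mem_image, Finset.mem_range] at ht
    obtain ⟨i, hi, rfl⟩ := ht
    exact key i (by omega)
  have hinj : Set.InjOn (fun i => Finset.univ.filter (fun x : Fin n => (x : ℕ) ≤ i))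
      (Finset.range (n - 1)) := by
    intro a ha b hb hab
    simp only [Finset.coe_range, Set.mem_Iio] at ha hb
    have ha' : a < n := by omega
    have hb' : b < n := by omega
    have hab : Finset.univ.filter (fun x : Fin n => (x : ℕ) ≤ a)
        = Finset.univ.filter (fun x : Fin n => (x : ℕ) ≤ b) := hab
    have h1 : (⟨a, ha'⟩ : Fin n) ∈ Finset.univ.filter (fun x : Fin n => (x : ℕ) ≤ b) := by
      rw [← hab]; simp
    have h2 : (⟨b, hb'⟩ : Fin n) ∈ Finset.univ.filter (fun x : Fin n => (x : ℕ) ≤ a) := by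
      rw [hab]; simp
    simp at h1 h2
    omega
  calc n - 1 = ((Finset.range (n - 1)).image
        (fun i => Finset.univ.filter (fun x : Fin n => (x : ℕ) ≤ i))).card := by
        rw [Finset.card_image_of_injOn hinj, Finset.card_range]
    _ ≤ T.card := Finset.card_le_card hsub
end

section
/- Let d ≥ 1, u ≥ 1, and c satisfy 1 ≤ c ≤ 2u, and let n ≥ d + ⌈c/2⌉ + u. Let T be a family of subsets of P = {1,…,n} with the following property: for every two repositories on P with K = ∅, at most u unknown dependencies (|U| ≤ u), at most d defective packages, and at most c weakly-conflicting pairs of non-defective packages each, if every query in T receives identical feedback under both repositories then the two repositories have the same set of defective packages. Then T is an (n, d+⌈c/2⌉−1, u+1)-cover-free family. -/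
/-- Any non-adaptive query family solving Maximal Sub-repository with at most
`u` unknown dependencies, at most `d` defects and at most `c ≤ 2u`
weakly-conflicting pairs of non-defective packages is an
`(n, d+⌈c/2⌉-1, u+1)`-cover-free family. -/
theorem maximal_subrepo_conflicts_CFF_lower_bound (n u c d : ℕ)
    (hd : 1 ≤ d) (hu : 1 ≤ u) (hc1 : 1 ≤ c) (hc2 : c ≤ 2 * u)
    (hn : d + (c + 1) / 2 + u ≤ n) (T : Finset (Finset (Fin n)))
    (hT : ∀ R₁ R₂ : Repo n,
      R₁.K = ∅ → R₂.K = ∅ →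
      R₁.U.card ≤ u → R₂.U.card ≤ u →
      (DefSet R₁).ncard ≤ d → (DefSet R₂).ncard ≤ d →
      (WeakConflictPairs R₁).ncard ≤ c → (WeakConflictPairs R₂).ncard ≤ c →
      (∀ t ∈ T, Successful R₁ t ↔ Successful R₂ t) →
      DefSet R₁ = DefSet R₂) :
    IsCFF n (d + (c + 1) / 2 - 1) (u + 1) T := by
  classical
  intro S₁ S₂ hdisj hS₁card hS₂card
  by_contra hcon
  push_neg at hcon
  -- pick p₀ ∈ S₂ and D = S₂ \ {p₀}
  have hS₂ne : S₂.Nonempty := by rw [← Finset.card_pos, hS₂card]; omega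
  obtain ⟨p₀, hp₀⟩ := hS₂ne
  set D := S₂.erase p₀ with hDdef
  have hDcard : D.card = u := by
    rw [hDdef, Finset.card_erase_of_mem hp₀, hS₂card]
    omega
  have hins : insert p₀ D = S₂ := Finset.insert_erase hp₀
  have hDS₂ : D ⊆ S₂ := Finset.erase_subset _ _
  -- split S₁ = A ∪ E
  obtain ⟨A, hAS₁, hAcard⟩ :=
    Finset.exists_subset_card_eq (show d - 1 ≤ S₁.card by omega)
  set E := S₁ \ A with hEdef
  have hES₁ : E ⊆ S₁ := Finset.sdiff_subset
  have hEcard : E.card = (c + 1) / 2 := by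
    rw [hEdef, Finset.card_sdiff_of_subset hAS₁, hS₁card, hAcard]; omega
  have hp₀S₁ : p₀ ∉ S₁ := fun h => Finset.disjoint_left.mp hdisj h hp₀
  have hp₀A : p₀ ∉ A := fun h => hp₀S₁ (hAS₁ h)
  have hS₁S₂ : ∀ x ∈ S₁, x ∉ S₂ := fun x hx => Finset.disjoint_left.mp hdisj hx
  -- the repositories' data
  set U₀ : Finset (Fin n × Fin n) := D.image (fun q => (p₀, q)) with hU₀def
  set C₀ : Finset (Sym2 (Fin n)) := E.image (fun e => s(e, p₀)) with hC₀def
  have hCdiag : ∀ s ∈ C₀, ¬ s.IsDiag := by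
    intro s hs
    rw [hC₀def] at hs
    obtain ⟨e, he, rfl⟩ := Finset.mem_image.mp hs
    rw [Sym2.mk_isDiag_iff]
    exact fun h => hp₀S₁ (h ▸ hES₁ he)
  have hU₀card : U₀.card ≤ u := by
    rw [hU₀def]
    exact le_trans Finset.card_image_le (le_of_eq hDcard)
  -- characterization of successful installations
  have hsucc : ∀ Bs I : Finset (Fin n),
      Successful (⟨∅, U₀, C₀, Bs, hCdiag⟩ : Repo n) I ↔
        Disjoint I Bs ∧ (p₀ ∈ I → D ⊆ I) ∧ ∀ e ∈ E, ¬(e ∈ I ∧ p₀ ∈ I) := by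
    intro Bs I
    unfold Successful
    simp only [Finset.empty_union]
    constructor
    · rintro ⟨h1, h2, h3⟩
      refine ⟨h1, ?_, ?_⟩
      · intro hpI q hq
        exact h2 (p₀, q) (by rw [hU₀def]; exact Finset.mem_image_of_mem _ hq) hpI
      · rintro e he ⟨heI, hpI⟩
        refine h3 (s(e, p₀)) (by rw [hC₀def]; exact Finset.mem_image_of_mem _ he) ?_
        intro x hx
        rcases Sym2.mem_iff.mp hx with rfl | rfl <;> assumption
    · rintro ⟨h1, h2, h3⟩
      refine ⟨h1, ?_, ?_⟩
      · rintro ⟨a, b⟩ hab h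
        rw [hU₀def] at hab
        obtain ⟨q, hq, heq⟩ := Finset.mem_image.mp hab
        cases heq
        exact h2 h hq
      · intro s hs hall
        rw [hC₀def] at hs
        obtain ⟨e, he, rfl⟩ := Finset.mem_image.mp hs
        exact h3 e he ⟨hall e (Sym2.mem_mk_left e p₀), hall p₀ (Sym2.mem_mk_right e p₀)⟩
  -- broken packages are defective
  have hdefB : ∀ (Bs : Finset (Fin n)), ∀ p ∈ Bs,
      Defective (⟨∅, U₀, C₀, Bs, hCdiag⟩ : Repo n) p := by
    intro Bs p hp I hI hpI
    exact Finset.disjoint_left.mp ((hsucc Bs I).mp hI).1 hpI hp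
  -- singletons of non-broken, non-p₀ packages are successful
  have hnondef : ∀ (Bs : Finset (Fin n)), ∀ p, p ∉ Bs → p ≠ p₀ →
      ¬ Defective (⟨∅, U₀, C₀, Bs, hCdiag⟩ : Repo n) p := by
    intro Bs p hpB hpne hdef
    refine hdef {p} ?_ (Finset.mem_singleton_self p)
    rw [hsucc]
    refine ⟨Finset.disjoint_singleton_left.mpr hpB, ?_, ?_⟩
    · intro h
      exact (hpne (Finset.mem_singleton.mp h).symm).elim
    · rintro e he ⟨-, hp0⟩
      exact hpne (Finset.mem_singleton.mp hp0).symm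
  -- S₂ itself is a successful installation when Bs = A
  have hS₂succ : Successful (⟨∅, U₀, C₀, A, hCdiag⟩ : Repo n) S₂ := by
    rw [hsucc]
    refine ⟨?_, fun _ => hDS₂, ?_⟩
    · exact (hdisj.mono_left hAS₁).symm
    · rintro e he ⟨heI, -⟩
      exact hS₁S₂ e (hES₁ he) heI
  -- defective sets
  have hdef₂ : DefSet (⟨∅, U₀, C₀, A, hCdiag⟩ : Repo n) = ↑A := by
    ext p
    simp only [DefSet, Set.mem_setOf_eq, Finset.mem_coe]
    constructor
    · intro hdef
      by_contra hpA
      by_cases hpp : p = p₀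
      · exact hdef S₂ hS₂succ (hpp ▸ hp₀)
      · exact hnondef A p hpA hpp hdef
    · exact hdefB A p
  have hdef₁ : DefSet (⟨∅, U₀, C₀, insert p₀ A, hCdiag⟩ : Repo n) = ↑(insert p₀ A) := by
    ext p
    simp only [DefSet, Set.mem_setOf_eq, Finset.mem_coe]
    constructor
    · intro hdef
      by_contra hpA
      have hpp : p ≠ p₀ := fun h => hpA (h ▸ Finset.mem_insert_self p₀ A)
      exact hnondef (insert p₀ A) p hpA hpp hdef
    · exact hdefB (insert p₀ A) p
  -- cardinality bounds on defective sets
  have hdcard₂ : (DefSet (⟨∅, U₀, C₀, A, hCdiag⟩ : Repo n)).ncard ≤ d := by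
    rw [hdef₂, Set.ncard_coe_finset, hAcard]; omega
  have hdcard₁ : (DefSet (⟨∅, U₀, C₀, insert p₀ A, hCdiag⟩ : Repo n)).ncard ≤ d := by
    rw [hdef₁, Set.ncard_coe_finset, Finset.card_insert_of_notMem hp₀A, hAcard]; omega
  -- weakly conflicting pairs bound
  set f : Fin n → Fin n × Fin n := fun e => if e < p₀ then (e, p₀) else (p₀, e) with hfdef
  have hwc : ∀ Bs : Finset (Fin n), Bs ⊆ insert p₀ A →
      (WeakConflictPairs (⟨∅, U₀, C₀, Bs, hCdiag⟩ : Repo n)).ncard ≤ c := by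
    intro Bs hBs
    have key : ∀ x : Fin n, x ∉ Bs → p₀ ∉ Bs → x ∉ E → x ≠ p₀ →
        Successful (⟨∅, U₀, C₀, Bs, hCdiag⟩ : Repo n) (insert x S₂) := by
      intro x hxB hp₀B hxE hxp
      rw [hsucc]
      refine ⟨?_, fun _ => hDS₂.trans (Finset.subset_insert _ _), ?_⟩
      · rw [Finset.disjoint_left]
        intro y hy hyB
        rcases Finset.mem_insert.mp hy with rfl | hyS₂
        · exact hxB hyB
        · rcases Finset.mem_insert.mp (hBs hyB) with rfl | hyA
          · exact hp₀B hyB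
          · exact hS₁S₂ y (hAS₁ hyA) hyS₂
      · rintro e he ⟨heI, -⟩
        rcases Finset.mem_insert.mp heI with rfl | heS₂
        · exact hxE he
        · exact hS₁S₂ e (hES₁ he) heS₂
    have hsub : WeakConflictPairs (⟨∅, U₀, C₀, Bs, hCdiag⟩ : Repo n) ⊆
        ↑(E.image f) := by
      rintro ⟨p, q⟩ ⟨hlt, hndp, hndq, hwconf⟩
      have hpB : p ∉ Bs := fun h => hndp (hdefB Bs p h)
      have hqB : q ∉ Bs := fun h => hndq (hdefB Bs q h)
      simp only [Finset.coe_image, Set.mem_image, Finset.mem_coe]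
      by_cases hp0 : p = p₀ ∨ q = p₀
      · rcases hp0 with rfl | rfl
        · -- p = p₀, so x := q with p₀ < q
          have hqE : q ∈ E := by
            by_contra hqE
            exact hwconf (insert q S₂) (key q hqB hpB hqE (ne_of_gt hlt))
              ⟨Finset.mem_insert_of_mem hp₀, Finset.mem_insert_self q S₂⟩
          refine ⟨q, hqE, ?_⟩
          rw [hfdef]
          simp only [if_neg (not_lt.mpr (le_of_lt hlt))]
        · -- q = p₀, so x := p with p < p₀
          have hpE : p ∈ E := by
            by_contra hpE
            exact hwconf (insert p S₂) (key p hpB hqB hpE (ne_of_lt hlt))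
              ⟨Finset.mem_insert_self p S₂, Finset.mem_insert_of_mem hp₀⟩
          refine ⟨p, hpE, ?_⟩
          rw [hfdef]
          simp only [if_pos hlt]
      · push_neg at hp0
        exfalso
        refine hwconf {p, q} ?_ ⟨by simp, by simp⟩
        rw [hsucc]
        refine ⟨?_, ?_, ?_⟩
        · rw [Finset.disjoint_left]
          intro y hy
          rcases Finset.mem_insert.mp hy with rfl | hy
          · exact hpB
          · rw [Finset.mem_singleton.mp hy]; exact hqB
        · intro h
          rcases Finset.mem_insert.mp h with h | h
          · exact (hp0.1 h.symm).elim
          · exact (hp0.2 (Finset.mem_singleton.mp h).symm).elim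
        · rintro e he ⟨-, hp0I⟩
          rcases Finset.mem_insert.mp hp0I with h | h
          · exact hp0.1 h.symm
          · exact hp0.2 (Finset.mem_singleton.mp h).symm
    calc (WeakConflictPairs (⟨∅, U₀, C₀, Bs, hCdiag⟩ : Repo n)).ncard
        ≤ (↑(E.image f) : Set (Fin n × Fin n)).ncard :=
          Set.ncard_le_ncard hsub (Finset.finite_toSet _)
      _ = (E.image f).card := Set.ncard_coe_finset _
      _ ≤ E.card := Finset.card_image_le
      _ ≤ c := by omega
  -- identical feedback on every query of T
  have hfeed : ∀ t ∈ T, Successful (⟨∅, U₀, C₀, insert p₀ A, hCdiag⟩ : Repo n) t ↔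
      Successful (⟨∅, U₀, C₀, A, hCdiag⟩ : Repo n) t := by
    intro t ht
    rw [hsucc, hsucc]
    constructor
    · rintro ⟨h1, h2, h3⟩
      exact ⟨h1.mono_right (Finset.subset_insert _ _), h2, h3⟩
    · rintro ⟨h1, h2, h3⟩
      refine ⟨?_, h2, h3⟩
      have hp₀t : p₀ ∉ t := by
        intro hpt
        have hS₂t : S₂ ⊆ t := by
          rw [← hins]; exact Finset.insert_subset hpt (h2 hpt)
        have hnd : ¬ Disjoint t S₁ := fun hdt => hcon t ht hdt hS₂t
        rw [Finset.not_disjoint_iff] at hnd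
        obtain ⟨x, hxt, hxS₁⟩ := hnd
        by_cases hxA : x ∈ A
        · exact Finset.disjoint_left.mp h1 hxt hxA
        · exact h3 x (Finset.mem_sdiff.mpr ⟨hxS₁, hxA⟩) ⟨hxt, hpt⟩
      rw [Finset.disjoint_insert_right]
      exact ⟨hp₀t, h1⟩
  -- apply the hypothesis and derive a contradiction
  have hDeq := hT (⟨∅, U₀, C₀, insert p₀ A, hCdiag⟩ : Repo n)
      (⟨∅, U₀, C₀, A, hCdiag⟩ : Repo n) rfl rfl hU₀card hU₀card hdcard₁ hdcard₂
      (hwc (insert p₀ A) (le_refl _)) (hwc A (Finset.subset_insert _ _)) hfeed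
  have hmem : p₀ ∈ (↑A : Set (Fin n)) := by
    rw [← hdef₂, ← hDeq, hdef₁]
    exact Finset.mem_coe.mpr (Finset.mem_insert_self p₀ A)
  exact hp₀A (Finset.mem_coe.mp hmem)
end

section
/- Let P = {1,…,n} and fix a repository on P with K = ∅ (all dependencies are unknown), at most u unknown dependencies (|U| ≤ u), at most c conflicts (|C| ≤ c), and at most d defective packages. Let the query family T be a family of subsets of P satisfying the (≤d+c+u, ≤u+1)-covering property. Then for every package p ∈ P: p is defective if and only if S(p) = ∅. -/
/-- With all dependencies unknown (`K = ∅`), at most `u` unknown dependencies,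
at most `c` conflicts and at most `d` defects, a `(≤d+c+u, ≤u+1)`-covering
query family identifies the defects. -/
theorem defect_identification_full_unknowns (n u c d : ℕ) (R : Repo n)
    (hK : R.K = ∅) (hU : R.U.card ≤ u) (hCc : R.C.card ≤ c)
    (hd : (DefSet R).ncard ≤ d)
    (T : Finset (Finset (Fin n))) (hT : CoveringLE n (d + c + u) (u + 1) T) :
    ∀ p : Fin n, Defective R p ↔ Sset R T p = ∅ := by
  classical
  intro p
  constructor
  · intro hdef
    apply Set.eq_empty_iff_forall_notMem.mpr
    rintro t ⟨ht, hsucc, hp⟩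
    exact hdef t hsucc hp
  · intro hS I hI hpI
    exfalso
    set edge := fun x y : Fin n => (x, y) ∈ R.U with hedge
    set J : Finset (Fin n) :=
      Finset.univ.filter (fun q => Relation.ReflTransGen edge p q) with hJ
    have hpJ : p ∈ J := by
      simp only [hJ, Finset.mem_filter, Finset.mem_univ, true_and]
      exact Relation.ReflTransGen.refl
    have hJmem : ∀ x, x ∈ J ↔ Relation.ReflTransGen edge p x := by
      intro x; simp [hJ]
    -- everything K-closed: any successful installation containing p contains J
    have hJI : ∀ x, Relation.ReflTransGen edge p x → x ∈ I := by
      intro x h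
      induction h with
      | refl => exact hpI
      | tail h' e ih =>
          exact hI.2.1 _ (Finset.mem_union.mpr (Or.inr e)) ih
    have hJsubI : ∀ x ∈ J, x ∈ I := fun x hx => hJI x ((hJmem x).mp hx)
    have hJclosed : ∀ q r : Fin n, (q, r) ∈ R.U → q ∈ J → r ∈ J := by
      intro q r he hq
      exact (hJmem r).mpr (Relation.ReflTransGen.tail ((hJmem q).mp hq) he)
    -- J is itself successful
    have hJsucc : Successful R J := by
      refine ⟨?_, ?_, ?_⟩
      · rw [Finset.disjoint_left]
        intro x hx hxB
        exact (Finset.disjoint_left.mp hI.1) (hJsubI x hx) hxB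
      · intro e he h1
        rw [hK] at he
        simp only [Finset.empty_union] at he
        exact hJclosed e.1 e.2 he h1
      · intro s hs h
        exact hI.2.2 s hs (fun x hx => hJsubI x (h x hx))
    have hnodefJ : ∀ x ∈ J, ¬ Defective R x := by
      intro x hx hdx
      exact hdx J hJsucc hx
    have hconf : ∀ s ∈ R.C, ∃ x, x ∈ s ∧ x ∉ J := by
      intro s hs
      by_contra h
      push_neg at h
      exact hJsucc.2.2 s hs h
    set f : Sym2 (Fin n) → Fin n :=
      fun s => if h : ∃ x, x ∈ s ∧ x ∉ J then h.choose else p with hf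
    have hfspec : ∀ s ∈ R.C, f s ∈ s ∧ f s ∉ J := by
      intro s hs
      have h := hconf s hs
      simp only [hf, dif_pos h]
      exact h.choose_spec
    -- the blocking set S₁
    set S₁ : Finset (Fin n) :=
      (DefSet R).toFinset ∪ R.C.image f ∪
        (R.U.filter (fun e => e.1 ∉ J)).image Prod.fst with hS₁
    have hS₁card : S₁.card ≤ d + c + u := by
      calc S₁.card ≤ ((DefSet R).toFinset ∪ R.C.image f).card +
            ((R.U.filter (fun e => e.1 ∉ J)).image Prod.fst).card :=
            Finset.card_union_le _ _
        _ ≤ ((DefSet R).toFinset.card + (R.C.image f).card) +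
            ((R.U.filter (fun e => e.1 ∉ J)).image Prod.fst).card := by
            exact Nat.add_le_add_right (Finset.card_union_le _ _) _
        _ ≤ d + c + u := by
            have h1 : (DefSet R).toFinset.card ≤ d := by
              rwa [← Set.ncard_eq_toFinset_card']
            have h2 : (R.C.image f).card ≤ c :=
              le_trans (Finset.card_image_le) hCc
            have h3 : ((R.U.filter (fun e => e.1 ∉ J)).image Prod.fst).card ≤ u := by
              refine le_trans (Finset.card_image_le) (le_trans ?_ hU)
              exact Finset.card_filter_le _ _
            omega
    have hdisjS : Disjoint S₁ J := by
      rw [Finset.disjoint_left]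
      intro x hx hxJ
      simp only [hS₁, Finset.mem_union, Finset.mem_image, Set.mem_toFinset,
        Finset.mem_filter] at hx
      rcases hx with (hx | hx) | hx
      · exact hnodefJ x hxJ hx
      · obtain ⟨s, hs, rfl⟩ := hx
        exact (hfspec s hs).2 hxJ
      · obtain ⟨e, ⟨heU, he1⟩, rfl⟩ := hx
        exact he1 hxJ
    have hJcard : J.card ≤ u + 1 := by
      have hsub : J ⊆ insert p (R.U.image Prod.snd) := by
        intro x hx
        rcases Relation.ReflTransGen.cases_tail ((hJmem x).mp hx) with h | ⟨b, _, hb⟩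
        · simp [h]
        · exact Finset.mem_insert_of_mem
            (Finset.mem_image.mpr ⟨(b, x), hb, rfl⟩)
      calc J.card ≤ (insert p (R.U.image Prod.snd)).card := Finset.card_le_card hsub
        _ ≤ (R.U.image Prod.snd).card + 1 := Finset.card_insert_le _ _
        _ ≤ u + 1 := by
            have := le_trans (Finset.card_image_le (f := Prod.snd) (s := R.U)) hU
            omega
    have hJpos : 1 ≤ J.card := Finset.card_pos.mpr ⟨p, hpJ⟩
    obtain ⟨v, hvT, hvdisj, hJv⟩ := hT S₁ J hdisjS hS₁card hJpos hJcard
    have hvS₁ : ∀ x ∈ v, x ∉ S₁ := fun x hx => Finset.disjoint_left.mp hvdisj hx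
    have hvsucc : Successful R v := by
      refine ⟨?_, ?_, ?_⟩
      · rw [Finset.disjoint_left]
        intro x hx hxB
        apply hvS₁ x hx
        simp only [hS₁, Finset.mem_union, Set.mem_toFinset]
        left; left
        intro I' hI' hxI'
        exact Finset.disjoint_left.mp hI'.1 hxI' hxB
      · intro e he h1
        rw [hK] at he
        simp only [Finset.empty_union] at he
        by_cases hq : e.1 ∈ J
        · exact hJv (hJclosed e.1 e.2 he hq)
        · exfalso
          apply hvS₁ e.1 h1
          simp only [hS₁, Finset.mem_union, Finset.mem_image, Finset.mem_filter]
          right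
          exact ⟨e, ⟨he, hq⟩, rfl⟩
      · intro s hs h
        apply hvS₁ (f s) (h (f s) (hfspec s hs).1)
        simp only [hS₁, Finset.mem_union, Finset.mem_image]
        left; right
        exact ⟨s, hs, rfl⟩
    have : v ∈ Sset R T p := ⟨hvT, hvsucc, hJv hpJ⟩
    rw [hS] at this
    exact this
end

section
/- Let P = {1,…,n} and fix a repository on P with K = ∅ (all dependencies are unknown), at most u unknown dependencies (|U| ≤ u), at most c conflicts (|C| ≤ c), and at most d defective packages. Let the query family T be a family of subsets of P satisfying the (≤d+c+u, ≤u+2)-covering property. Then for all packages p, q ∈ P: p and q weakly conflict if and only if S(p) ∩ S(q) = ∅. -/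
/-- With all dependencies unknown (`K = ∅`), at most `u` unknown dependencies,
at most `c` conflicts and at most `d` defects, a `(≤d+c+u, ≤u+2)`-covering
query family identifies the weak conflicts. -/
theorem conflict_identification_full_unknowns (n u c d : ℕ) (R : Repo n)
    (hK : R.K = ∅) (hU : R.U.card ≤ u) (hCc : R.C.card ≤ c)
    (hd : (DefSet R).ncard ≤ d)
    (T : Finset (Finset (Fin n))) (hT : CoveringLE n (d + c + u) (u + 2) T) :
    ∀ p q : Fin n,
      WeakConflict R p q ↔ Sset R T p ∩ Sset R T q = ∅ := by
  classical
  intro p q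
  constructor
  · intro h
    ext t
    simp only [Set.mem_inter_iff, Set.mem_empty_iff_false, iff_false, not_and]
    rintro ⟨_, hs, hp⟩ ⟨_, _, hq⟩
    exact h t hs ⟨hp, hq⟩
  · intro hemp I hI hpq
    obtain ⟨hpI, hqI⟩ := hpq
    set pick : Sym2 (Fin n) → Fin n := fun s =>
      if h : ∃ x, x ∈ s ∧ x ∉ I then h.choose else p with hpick
    have hpickC : ∀ s ∈ R.C, pick s ∈ s ∧ pick s ∉ I := by
      intro s hs
      have hex : ∃ x, x ∈ s ∧ x ∉ I := by
        by_contra hco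
        push_neg at hco
        exact hI.2.2 s hs (fun x hx => hco x hx)
      simp only [hpick, dif_pos hex]
      exact hex.choose_spec
    set S₁ : Finset (Fin n) :=
      ((Set.toFinite (DefSet R)).toFinset ∪ R.C.image pick) ∪
        (R.U.filter (fun e => e.1 ∉ I)).image Prod.fst with hS1
    set S₂ : Finset (Fin n) :=
      insert p (insert q ((R.U.filter (fun e => e.1 ∈ I)).image Prod.snd))
      with hS2
    have hS2I : ∀ x ∈ S₂, x ∈ I := by
      intro x hx
      simp only [hS2, Finset.mem_insert, Finset.mem_image,
        Finset.mem_filter] at hx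
      rcases hx with rfl | rfl | ⟨e, ⟨heU, he1⟩, rfl⟩
      · exact hpI
      · exact hqI
      · exact hI.2.1 e (by simp [hK, heU]) he1
    have hS1I : ∀ x ∈ S₁, x ∉ I := by
      intro x hx
      simp only [hS1, Finset.mem_union, Set.Finite.mem_toFinset,
        Finset.mem_image, Finset.mem_filter] at hx
      rcases hx with (hdef | ⟨s, hs, rfl⟩) | ⟨e, ⟨heU, he1⟩, rfl⟩
      · exact hdef I hI
      · exact (hpickC s hs).2
      · exact he1
    have hdisj : Disjoint S₁ S₂ := by
      rw [Finset.disjoint_left]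
      intro x hx1 hx2
      exact hS1I x hx1 (hS2I x hx2)
    have hc1 : S₁.card ≤ d + c + u := by
      calc S₁.card ≤ ((Set.toFinite (DefSet R)).toFinset ∪
            R.C.image pick).card +
            ((R.U.filter (fun e => e.1 ∉ I)).image Prod.fst).card :=
            Finset.card_union_le _ _
        _ ≤ ((Set.toFinite (DefSet R)).toFinset.card +
            (R.C.image pick).card) +
            ((R.U.filter (fun e => e.1 ∉ I)).image Prod.fst).card :=
            Nat.add_le_add_right (Finset.card_union_le _ _) _
        _ ≤ d + c + u := by
            have h1 : (Set.toFinite (DefSet R)).toFinset.card ≤ d := by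
              rwa [← Set.ncard_eq_toFinset_card _ (Set.toFinite _)]
            have h2 : (R.C.image pick).card ≤ c :=
              le_trans (Finset.card_image_le) hCc
            have h3 : ((R.U.filter (fun e => e.1 ∉ I)).image Prod.fst).card
                ≤ u :=
              le_trans Finset.card_image_le
                (le_trans (Finset.card_filter_le _ _) hU)
            omega
    have hc2 : S₂.card ≤ u + 2 := by
      have h3 : ((R.U.filter (fun e => e.1 ∈ I)).image Prod.snd).card ≤ u :=
        le_trans Finset.card_image_le
          (le_trans (Finset.card_filter_le _ _) hU)
      calc S₂.card ≤ (insert q ((R.U.filter (fun e => e.1 ∈ I)).image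
            Prod.snd)).card + 1 := Finset.card_insert_le _ _
        _ ≤ ((R.U.filter (fun e => e.1 ∈ I)).image Prod.snd).card + 1 + 1 :=
            Nat.add_le_add_right (Finset.card_insert_le _ _) _
        _ ≤ u + 2 := by omega
    have hc2' : 1 ≤ S₂.card := by
      refine Finset.card_pos.mpr ⟨p, ?_⟩
      simp [hS2]
    obtain ⟨v, hvT, hvdis, hvsub⟩ := hT S₁ S₂ hdisj hc1 hc2' hc2
    have hvS : Successful R v := by
      refine ⟨?_, ?_, ?_⟩
      · rw [Finset.disjoint_right]
        intro b hb
        have hbdef : Defective R b := by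
          intro I' hI' hbI'
          exact (Finset.disjoint_left.mp hI'.1) hbI' hb
        have : b ∈ S₁ := by
          simp only [hS1, Finset.mem_union, Set.Finite.mem_toFinset]
          exact Or.inl (Or.inl hbdef)
        exact Finset.disjoint_right.mp hvdis this
      · intro e he he1
        have heU : e ∈ R.U := by simpa [hK] using he
        by_cases h1 : e.1 ∈ I
        · have : e.2 ∈ S₂ := by
            simp only [hS2, Finset.mem_insert, Finset.mem_image,
              Finset.mem_filter]
            exact Or.inr (Or.inr ⟨e, ⟨heU, h1⟩, rfl⟩)
          exact hvsub this
        · exfalso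
          have : e.1 ∈ S₁ := by
            simp only [hS1, Finset.mem_union, Finset.mem_image,
              Finset.mem_filter]
            exact Or.inr ⟨e, ⟨heU, h1⟩, rfl⟩
          exact Finset.disjoint_left.mp hvdis he1 this
      · intro s hs hall
        have hps := hpickC s hs
        have : pick s ∈ S₁ := by
          simp only [hS1, Finset.mem_union]
          exact Or.inl (Or.inr (Finset.mem_image_of_mem pick hs))
        exact Finset.disjoint_right.mp hvdis this (hall _ hps.1)
    have hpv : p ∈ v := hvsub (by simp [hS2])
    have hqv : q ∈ v := hvsub (by simp [hS2])
    have : v ∈ Sset R T p ∩ Sset R T q :=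
      ⟨⟨hvT, hvS, hpv⟩, ⟨hvT, hvS, hqv⟩⟩
    rw [hemp] at this
    exact this
end

section
/- Let P = {1,…,n} and fix a repository on P with K = ∅ (all dependencies are unknown), at most u unknown dependencies (|U| ≤ u), at most c conflicts (|C| ≤ c), and at most d defective packages. Let the query family T be a family of subsets of P satisfying the (≤d+c+u+1, ≤u+1)-covering property. Then for all packages p, q ∈ P: p weakly depends on q if and only if S(p) ⊆ S(q). -/
/-- With all dependencies unknown (`K = ∅`), at most `u` unknown dependencies,
at most `c` conflicts and at most `d` defects, a `(≤d+c+u+1, ≤u+1)`-covering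
query family identifies the weak dependencies. -/
theorem dependency_identification_full_unknowns (n u c d : ℕ) (R : Repo n)
    (hK : R.K = ∅) (hU : R.U.card ≤ u) (hCc : R.C.card ≤ c)
    (hd : (DefSet R).ncard ≤ d)
    (T : Finset (Finset (Fin n)))
    (hT : CoveringLE n (d + c + u + 1) (u + 1) T) :
    ∀ p q : Fin n, WeakDep R p q ↔ Sset R T p ⊆ Sset R T q := by

  classical
  intro p q
  constructor
  · intro h t ht
    exact ⟨ht.1, ht.2.1, h t ht.2.1 ht.2.2⟩
  · intro hS
    intro I hI hpI
    by_contra hqI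
    -- D: packages reachable from p along U-edges
    set D : Finset (Fin n) :=
      Finset.univ.filter
        (fun r => Relation.ReflTransGen (fun x y => (x, y) ∈ R.U) p r) with hDdef
    have hpD : p ∈ D :=
      Finset.mem_filter.mpr ⟨Finset.mem_univ _, Relation.ReflTransGen.refl⟩
    have hreach : ∀ r, Relation.ReflTransGen (fun x y => (x, y) ∈ R.U) p r → r ∈ I := by
      intro r h
      induction h with
      | refl => exact hpI
      | tail h' e ih => exact hI.2.1 _ (Finset.mem_union_right _ e) ih
    have hDI : ∀ r ∈ D, r ∈ I := by
      intro r hr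
      exact hreach r (Finset.mem_filter.mp hr).2
    have hDclosed : ∀ e ∈ R.U, e.1 ∈ D → e.2 ∈ D := by
      intro e he h1
      exact Finset.mem_filter.mpr ⟨Finset.mem_univ _,
        (Finset.mem_filter.mp h1).2.tail he⟩
    have hDcard : D.card ≤ u + 1 := by
      have hsub : D ⊆ insert p (R.U.image Prod.snd) := by
        intro r hr
        have hr' := (Finset.mem_filter.mp hr).2
        cases hr' with
        | refl => exact Finset.mem_insert_self _ _
        | tail h' e =>
          exact Finset.mem_insert_of_mem (Finset.mem_image.mpr ⟨_, e, rfl⟩)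
      calc D.card ≤ (insert p (R.U.image Prod.snd)).card := Finset.card_le_card hsub
        _ ≤ (R.U.image Prod.snd).card + 1 := Finset.card_insert_le _ _
        _ ≤ R.U.card + 1 := by
            exact Nat.add_le_add_right (Finset.card_image_le) 1
        _ ≤ u + 1 := Nat.add_le_add_right hU 1
    -- defective packages as a finset
    have hdfin : (DefSet R).Finite := Set.toFinite _
    set Sd : Finset (Fin n) := hdfin.toFinset with hSddef
    have hSdcard : Sd.card ≤ d := by
      rw [hSddef, ← Set.ncard_eq_toFinset_card (DefSet R) hdfin]
      exact hd
    have hSdmem : ∀ x, x ∈ Sd ↔ Defective R x := by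
      intro x; simp [hSddef, Set.Finite.mem_toFinset, DefSet]
    -- conflict choice function
    have hconf : ∀ s ∈ R.C, ∃ x, x ∈ s ∧ x ∉ D := by
      intro s hs
      have h2 := hI.2.2 s hs
      push_neg at h2
      obtain ⟨x, hx, hxI⟩ := h2
      exact ⟨x, hx, fun hxD => hxI (hDI x hxD)⟩
    set g : Sym2 (Fin n) → Fin n :=
      fun s => if h : ∃ x, x ∈ s ∧ x ∉ D then h.choose else p with hgdef
    have hgspec : ∀ s ∈ R.C, g s ∈ s ∧ g s ∉ D := by
      intro s hs
      have h := hconf s hs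
      simp only [hgdef, dif_pos h]
      exact h.choose_spec
    set Sconf : Finset (Fin n) := R.C.image g with hSconfdef
    have hSconfcard : Sconf.card ≤ c := le_trans Finset.card_image_le hCc
    set Sedge : Finset (Fin n) :=
      (R.U.filter (fun e => e.1 ∉ D)).image Prod.fst with hSedgedef
    have hSedgecard : Sedge.card ≤ u :=
      le_trans Finset.card_image_le (le_trans (Finset.card_filter_le _ _) hU)
    set S₁ : Finset (Fin n) := (Sd ∪ Sconf ∪ Sedge ∪ {q}) \ D with hS₁def
    have hS₁card : S₁.card ≤ d + c + u + 1 := by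
      calc S₁.card ≤ (Sd ∪ Sconf ∪ Sedge ∪ {q}).card :=
            Finset.card_le_card (Finset.sdiff_subset)
        _ ≤ (Sd ∪ Sconf ∪ Sedge).card + ({q} : Finset (Fin n)).card :=
            Finset.card_union_le _ _
        _ ≤ ((Sd ∪ Sconf).card + Sedge.card) + 1 := by
            simp only [Finset.card_singleton]
            exact Nat.add_le_add_right (Finset.card_union_le _ _) 1
        _ ≤ ((Sd.card + Sconf.card) + Sedge.card) + 1 := by
            exact Nat.add_le_add_right
              (Nat.add_le_add_right (Finset.card_union_le _ _) _) 1
        _ ≤ ((d + c) + u) + 1 := by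
            exact Nat.add_le_add_right
              (Nat.add_le_add (Nat.add_le_add hSdcard hSconfcard) hSedgecard) 1
    have hdisj : Disjoint S₁ D := Finset.sdiff_disjoint
    obtain ⟨v, hvT, hvdisj, hDv⟩ :=
      hT S₁ D hdisj hS₁card (Finset.card_pos.mpr ⟨p, hpD⟩) hDcard
    have hqD : q ∉ D := fun hq => hqI (hDI q hq)
    have hqS₁ : q ∈ S₁ := by
      rw [hS₁def, Finset.mem_sdiff]
      exact ⟨Finset.mem_union_right _ (Finset.mem_singleton_self q), hqD⟩
    have hnotin : ∀ x ∈ S₁, x ∉ v := fun x hx hxv =>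
      (Finset.disjoint_right.mp hvdisj hx) hxv
    -- v is successful
    have hvsucc : Successful R v := by
      refine ⟨?_, ?_, ?_⟩
      · rw [Finset.disjoint_right]
        intro b hb hbv
        have hbdef : Defective R b := fun J hJ hbJ =>
          (Finset.disjoint_right.mp hJ.1 hb) hbJ
        have hbD : b ∉ D := fun hbD => hbdef I hI (hDI b hbD)
        have hbS₁ : b ∈ S₁ := by
          rw [hS₁def, Finset.mem_sdiff]
          exact ⟨Finset.mem_union_left _ (Finset.mem_union_left _
            (Finset.mem_union_left _ ((hSdmem b).mpr hbdef))), hbD⟩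
        exact hnotin b hbS₁ hbv
      · intro e he h1
        rw [hK, Finset.empty_union] at he
        by_cases h1D : e.1 ∈ D
        · exact hDv (hDclosed e he h1D)
        · have he1 : e.1 ∈ S₁ := by
            rw [hS₁def, Finset.mem_sdiff]
            refine ⟨Finset.mem_union_left _ (Finset.mem_union_right _ ?_), h1D⟩
            exact Finset.mem_image.mpr ⟨e, Finset.mem_filter.mpr ⟨he, h1D⟩, rfl⟩
          exact absurd h1 (hnotin _ he1)
      · intro s hs hall
        obtain ⟨hg1, hg2⟩ := hgspec s hs
        have hgS₁ : g s ∈ S₁ := by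
          rw [hS₁def, Finset.mem_sdiff]
          exact ⟨Finset.mem_union_left _ (Finset.mem_union_left _
            (Finset.mem_union_right _ (Finset.mem_image.mpr ⟨s, hs, rfl⟩))), hg2⟩
        exact hnotin _ hgS₁ (hall _ hg1)
    have hvSp : v ∈ Sset R T p := ⟨hvT, hvsucc, hDv hpD⟩
    have hvSq := hS hvSp
    exact hnotin q hqS₁ hvSq.2.2
end

section
/- Let P = {1,…,n} and fix a repository on P with K = ∅ (all dependencies are unknown), at most u unknown dependencies (|U| ≤ u), at most c conflicts (|C| ≤ c), and at most d defective packages. Let the query family T be a family of subsets of P satisfying the (≤d+c+u+1, ≤u+2)-covering property. Then the feedback on T determines the full structure of the repository: for every p ∈ P, p is defective if and only if S(p) = ∅; for all p, q ∈ P, p and q weakly conflict if and only if S(p) ∩ S(q) = ∅; and for all p, q ∈ P, p weakly depends on q if and only if S(p) ⊆ S(q). -/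
lemma kclosure_subset_of_successful {n : ℕ} (R : Repo n)
    (I W : Finset (Fin n)) (hI : Successful R I) (hWI : W ⊆ I) :
    kclosure R.U W ⊆ I := by
  intro p hp
  simp only [kclosure, Finset.mem_filter, Finset.mem_univ, true_and] at hp
  obtain ⟨q, hq, hqp⟩ := hp
  induction hqp with
  | refl => exact hWI hq
  | tail _ h₂ ih => exact hI.2.1 _ (Finset.mem_union.mpr (Or.inr h₂)) ih

open Classical Finset in
lemma key_construction {n u c d : ℕ} (R : Repo n)
    (hK : R.K = ∅) (hU : R.U.card ≤ u) (hCc : R.C.card ≤ c)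
    (hd : (DefSet R).ncard ≤ d)
    (T : Finset (Finset (Fin n)))
    (hT : CoveringLE n (d + c + u + 1) (u + 2) T)
    (I : Finset (Fin n)) (hI : Successful R I)
    (W : Finset (Fin n)) (hWI : W ⊆ I) (hWne : W.Nonempty) (hW2 : W.card ≤ 2)
    (E : Finset (Fin n)) (hE1 : E.card ≤ 1)
    (hEJ : Disjoint E (kclosure R.U W)) :
    ∃ v ∈ T, Successful R v ∧ W ⊆ v ∧ Disjoint v E := by
  classical
  set J := kclosure R.U W with hJ
  -- basic closure facts
  have hWJ : W ⊆ J := by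
    intro p hp
    simp only [hJ, kclosure, Finset.mem_filter, Finset.mem_univ, true_and]
    exact ⟨p, hp, Relation.ReflTransGen.refl⟩
  have hJI : J ⊆ I := kclosure_subset_of_successful R I W hI hWI
  have hJclosed : ∀ a b : Fin n, a ∈ J → (a, b) ∈ R.U → b ∈ J := by
    intro a b ha hab
    simp only [hJ, kclosure, Finset.mem_filter, Finset.mem_univ, true_and] at ha ⊢
    obtain ⟨q, hq, hqa⟩ := ha
    exact ⟨q, hq, hqa.tail hab⟩
  -- cardinality of J
  have hJcard : J.card ≤ W.card + u := by
    have hsub : J \ W ⊆ R.U.image Prod.snd := by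
      intro p hp
      rw [Finset.mem_sdiff] at hp
      obtain ⟨hpJ, hpW⟩ := hp
      simp only [hJ, kclosure, Finset.mem_filter, Finset.mem_univ, true_and] at hpJ
      obtain ⟨q, hq, hqp⟩ := hpJ
      rcases hqp.cases_tail with rfl | ⟨b, _, hb⟩
      · exact absurd hq hpW
      · exact Finset.mem_image.mpr ⟨(b, p), hb, rfl⟩
    have h1 : J ⊆ W ∪ (J \ W) := by
      intro p hp
      by_cases hw : p ∈ W
      · exact Finset.mem_union_left _ hw
      · exact Finset.mem_union_right _ (Finset.mem_sdiff.mpr ⟨hp, hw⟩)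
    calc J.card ≤ (W ∪ (J \ W)).card := Finset.card_le_card h1
      _ ≤ W.card + (J \ W).card := Finset.card_union_le _ _
      _ ≤ W.card + (R.U.image Prod.snd).card :=
          Nat.add_le_add_left (Finset.card_le_card hsub) _
      _ ≤ W.card + R.U.card := Nat.add_le_add_left (Finset.card_image_le) _
      _ ≤ W.card + u := Nat.add_le_add_left hU _
  -- the three pieces of S₁
  have hBdef : ∀ p ∈ R.B, Defective R p := by
    intro p hp I' hI' hpI'
    exact Finset.disjoint_left.mp hI'.1 hpI' hp
  set DefF : Finset (Fin n) := (Set.toFinite (DefSet R)).toFinset with hDefF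
  have hDefFcard : DefF.card ≤ d := by
    rw [hDefF, ← Set.ncard_eq_toFinset_card]; exact hd
  set Tails : Finset (Fin n) := R.U.image Prod.fst with hTails
  have hpick : ∀ s ∈ R.C, ∃ x, x ∈ s ∧ x ∉ I := by
    intro s hs
    have := hI.2.2 s hs
    push_neg at this
    exact this
  choose f hf1 hf2 using hpick
  set Picks : Finset (Fin n) := R.C.attach.image (fun s => f s.1 s.2) with hPicks
  set S₁ : Finset (Fin n) := ((DefF ∪ Tails ∪ Picks) \ J) ∪ E with hS₁
  have hdisj : Disjoint S₁ J := by
    rw [hS₁, Finset.disjoint_union_left]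
    exact ⟨Finset.sdiff_disjoint, hEJ⟩
  have hS₁card : S₁.card ≤ d + c + u + 1 := by
    have h1 : ((DefF ∪ Tails ∪ Picks) \ J).card ≤ d + u + c := by
      calc ((DefF ∪ Tails ∪ Picks) \ J).card ≤ (DefF ∪ Tails ∪ Picks).card :=
            Finset.card_le_card (Finset.sdiff_subset)
        _ ≤ (DefF ∪ Tails).card + Picks.card := Finset.card_union_le _ _
        _ ≤ DefF.card + Tails.card + Picks.card :=
            Nat.add_le_add_right (Finset.card_union_le _ _) _
        _ ≤ d + u + c := by
            have h2 : Tails.card ≤ u := le_trans Finset.card_image_le hU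
            have h3 : Picks.card ≤ c := by
              calc Picks.card ≤ R.C.attach.card := Finset.card_image_le
                _ = R.C.card := Finset.card_attach
                _ ≤ c := hCc
            omega
    have := Finset.card_union_le ((DefF ∪ Tails ∪ Picks) \ J) E
    rw [← hS₁] at this
    omega
  obtain ⟨v, hvT, hvS₁, hJv⟩ := hT S₁ J hdisj hS₁card
    (le_trans (Finset.card_pos.mpr hWne) (Finset.card_le_card hWJ))
    (le_trans hJcard (by omega))
  refine ⟨v, hvT, ?_, fun x hx => hJv (hWJ hx), ?_⟩
  · -- v is successful
    refine ⟨?_, ?_, ?_⟩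
    · -- disjoint from broken
      rw [Finset.disjoint_left]
      intro x hxv hxB
      have hxJ : x ∉ J := fun h => Finset.disjoint_left.mp hI.1 (hJI h) hxB
      have hxS₁ : x ∈ S₁ := by
        rw [hS₁]
        refine Finset.mem_union_left _ (Finset.mem_sdiff.mpr ⟨?_, hxJ⟩)
        refine Finset.mem_union_left _ (Finset.mem_union_left _ ?_)
        rw [hDefF, Set.Finite.mem_toFinset]
        exact hBdef x hxB
      exact Finset.disjoint_left.mp hvS₁ hxv hxS₁
    · -- closed under dependencies
      intro e he h1
      rw [hK, Finset.empty_union] at he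
      by_cases he1 : e.1 ∈ J
      · exact hJv (hJclosed e.1 e.2 he1 he)
      · exfalso
        have : e.1 ∈ S₁ := by
          rw [hS₁]
          refine Finset.mem_union_left _ (Finset.mem_sdiff.mpr ⟨?_, he1⟩)
          refine Finset.mem_union_left _ (Finset.mem_union_right _ ?_)
          exact Finset.mem_image.mpr ⟨e, he, rfl⟩
        exact Finset.disjoint_left.mp hvS₁ h1 this
    · -- no conflicts
      intro s hs hall
      have hfv : f s hs ∈ v := hall _ (hf1 s hs)
      have hfJ : f s hs ∉ J := fun h => hf2 s hs (hJI h)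
      have : f s hs ∈ S₁ := by
        rw [hS₁]
        refine Finset.mem_union_left _ (Finset.mem_sdiff.mpr ⟨?_, hfJ⟩)
        refine Finset.mem_union_right _ ?_
        exact Finset.mem_image.mpr ⟨⟨s, hs⟩, Finset.mem_attach _ _, rfl⟩
      exact Finset.disjoint_left.mp hvS₁ hfv this
  · -- disjoint from E
    rw [Finset.disjoint_left]
    intro x hxv hxE
    exact Finset.disjoint_left.mp hvS₁ hxv
      (by rw [hS₁]; exact Finset.mem_union_right _ hxE)

/-- With all dependencies unknown (`K = ∅`), at most `u` unknown dependencies,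
at most `c` conflicts and at most `d` defects, a `(≤d+c+u+1, ≤u+2)`-covering
query family determines the full structure: defects, weak conflicts and weak
dependencies. -/
theorem full_learning_upper_bound (n u c d : ℕ) (R : Repo n)
    (hK : R.K = ∅) (hU : R.U.card ≤ u) (hCc : R.C.card ≤ c)
    (hd : (DefSet R).ncard ≤ d)
    (T : Finset (Finset (Fin n)))
    (hT : CoveringLE n (d + c + u + 1) (u + 2) T) :
    (∀ p : Fin n, Defective R p ↔ Sset R T p = ∅) ∧
      (∀ p q : Fin n,
        WeakConflict R p q ↔ Sset R T p ∩ Sset R T q = ∅) ∧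
      (∀ p q : Fin n, WeakDep R p q ↔ Sset R T p ⊆ Sset R T q) := by
  refine ⟨?_, ?_, ?_⟩
  · intro p
    constructor
    · intro hdef
      ext t
      simp only [Sset, Set.mem_setOf_eq, Set.mem_empty_iff_false, iff_false]
      rintro ⟨_, hts, hpt⟩
      exact hdef t hts hpt
    · intro hS I hI hpI
      have hne : ({p} : Finset (Fin n)).Nonempty := Finset.singleton_nonempty p
      obtain ⟨v, hvT, hvs, hpv, _⟩ := key_construction R hK hU hCc hd T hT I hI
        {p} (Finset.singleton_subset_iff.mpr hpI) hne (by simp) ∅ (by simp)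
        (Finset.disjoint_empty_left _)
      have : v ∈ Sset R T p := ⟨hvT, hvs, hpv (Finset.mem_singleton_self p)⟩
      rw [hS] at this
      exact this
  · intro p q
    constructor
    · intro hwc
      rw [Set.eq_empty_iff_forall_notMem]
      rintro t ⟨⟨_, hts, hpt⟩, ⟨_, _, hqt⟩⟩
      exact hwc t hts ⟨hpt, hqt⟩
    · intro hS I hI ⟨hpI, hqI⟩
      obtain ⟨v, hvT, hvs, hpqv, _⟩ := key_construction R hK hU hCc hd T hT I hI
        {p, q} (by intro x hx; rcases Finset.mem_insert.mp hx with rfl | hx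
                   · exact hpI
                   · rw [Finset.mem_singleton.mp hx]; exact hqI)
        ⟨p, Finset.mem_insert_self p {q}⟩
        (le_trans (Finset.card_insert_le p {q}) (by simp)) ∅ (by simp)
        (Finset.disjoint_empty_left _)
      have : v ∈ Sset R T p ∩ Sset R T q :=
        ⟨⟨hvT, hvs, hpqv (Finset.mem_insert_self p {q})⟩,
         ⟨hvT, hvs, hpqv (Finset.mem_insert_of_mem (Finset.mem_singleton_self q))⟩⟩
      rw [hS] at this
      exact this
  · intro p q
    constructor
    · rintro hwd t ⟨htT, hts, hpt⟩
      exact ⟨htT, hts, hwd t hts hpt⟩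
    · intro hS I hI hpI
      by_contra hqI
      have hqJ : Disjoint ({q} : Finset (Fin n)) (kclosure R.U {p}) := by
        rw [Finset.disjoint_left]
        intro x hx hxJ
        rw [Finset.mem_singleton] at hx
        subst hx
        exact hqI (kclosure_subset_of_successful R I {p} hI
          (Finset.singleton_subset_iff.mpr hpI) hxJ)
      obtain ⟨v, hvT, hvs, hpv, hvE⟩ := key_construction R hK hU hCc hd T hT I hI
        {p} (Finset.singleton_subset_iff.mpr hpI) (Finset.singleton_nonempty p)
        (by simp) {q} (by simp) hqJ
      have hvin : v ∈ Sset R T p := ⟨hvT, hvs, hpv (Finset.mem_singleton_self p)⟩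
      have := hS hvin
      exact Finset.disjoint_left.mp hvE this.2.2 (Finset.mem_singleton_self q)
end
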